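/- arXiv:2309.15006 — 8 statements merged into one kernel-verified Lean document; each statement's English description precedes it below -/
import Mathlib

section
/- The function f(x,y) = √2·|x| − |y| on ℝ² is a viscosity solution of the Lorentzian eikonal equation g(∇u,∇u) = −1 on the 2-dimensional Minkowski space-time: for every point p ∈ ℝ² and every upper test function φ for f at p one has (∂φ/∂x(p))² − (∂φ/∂y(p))² ≥ 1, and for every point p ∈ ℝ² and every lower test function φ for f at p one has (∂φ/∂x(p))² − (∂φ/∂y(p))² ≤ 1. -/
/-- `u` is a viscosity solution of the Lorentzian eikonal equation
`g(∇u,∇u) = -1` on the open set `O` in 2-dimensional Minkowski space-time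
(metric `-dx² + dy²`): for every upper test function `φ` at `p ∈ O`,
`(∂φ/∂x(p))² - (∂φ/∂y(p))² ≥ 1`, and for every lower test function `φ` at `p`,
`(∂φ/∂x(p))² - (∂φ/∂y(p))² ≤ 1`. -/
def IsViscositySolution (u : ℝ × ℝ → ℝ) (O : Set (ℝ × ℝ)) : Prop :=
  (∀ p ∈ O, ∀ φ : ℝ × ℝ → ℝ, ∀ U : Set (ℝ × ℝ),
      IsOpen U → p ∈ U → U ⊆ O → ContDiffOn ℝ 1 φ U → φ p = u p →
      (∀ x ∈ U, u x ≤ φ x) →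
      1 ≤ (fderiv ℝ φ p (1, 0)) ^ 2 - (fderiv ℝ φ p (0, 1)) ^ 2) ∧
  (∀ p ∈ O, ∀ φ : ℝ × ℝ → ℝ, ∀ U : Set (ℝ × ℝ),
      IsOpen U → p ∈ U → U ⊆ O → ContDiffOn ℝ 1 φ U → φ p = u p →
      (∀ x ∈ U, φ x ≤ u x) →
      (fderiv ℝ φ p (1, 0)) ^ 2 - (fderiv ℝ φ p (0, 1)) ^ 2 ≤ 1)

/-!
If `φ` touches `u` from above at `p`, then `φ - u` has a local minimum at `p`, so along every ray
from `p` the derivative of `φ` dominates the one-sided slope of `u`. For `u = α|x| - β|y|` the ray in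
the direction of `sign x` has slope `α`, while every vertical ray has slope at least `-β`; hence
`|∂ₓφ| ≥ α`, `|∂_yφ| ≤ β` and `(∂ₓφ)² - (∂_yφ)² ≥ α² - β²`, which is `1` for `α = √2`, `β = 1`.
Touching from below reverses every inequality.
-/

open Filter Topology

theorem isLocalMin_sub_of_eq_of_le {X : Type*} [TopologicalSpace X] {φ u : X → ℝ} {p : X}
    {U : Set X} (hU : U ∈ 𝓝 p) (heq : φ p = u p) (hle : ∀ x ∈ U, u x ≤ φ x) :
    IsLocalMin (fun x => φ x - u x) p :=
  eventually_of_mem hU fun x hx => by linarith [hle x hx]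

theorem isLocalMax_sub_of_eq_of_le {X : Type*} [TopologicalSpace X] {φ u : X → ℝ} {p : X}
    {U : Set X} (hU : U ∈ 𝓝 p) (heq : φ p = u p) (hle : ∀ x ∈ U, φ x ≤ u x) :
    IsLocalMax (fun x => φ x - u x) p :=
  eventually_of_mem hU fun x hx => by linarith [hle x hx]

section LocalExtremum

variable {E : Type*} [NormedAddCommGroup E] [NormedSpace ℝ E] {φ u : E → ℝ} {p v : E} {c : ℝ}

theorem HasLineDerivAt.le_of_eventually_mul_le {f' : ℝ} (h : HasLineDerivAt ℝ φ f' p v)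
    (hc : ∀ᶠ t in 𝓝[>] 0, c * t ≤ φ (p + t • v) - φ p) : c ≤ f' :=
  ge_of_tendsto h.tendsto_slope_zero_right <| by
    filter_upwards [hc, self_mem_nhdsWithin] with t ht (htpos : 0 < t)
    rwa [smul_eq_mul, le_inv_mul_iff₀ htpos, mul_comm]

theorem IsLocalMin.le_fderiv_apply_of_sub (hmin : IsLocalMin (fun x => φ x - u x) p)
    (hφ : DifferentiableAt ℝ φ p) (hu : ∀ᶠ t in 𝓝[>] 0, c * t ≤ u (p + t • v) - u p) :
    c ≤ fderiv ℝ φ p v := by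
  have hline : Tendsto (fun t : ℝ => p + t • v) (𝓝[>] 0) (𝓝 p) :=
    (Continuous.tendsto' (by fun_prop) 0 p (by simp)).mono_left nhdsWithin_le_nhds
  refine (hφ.hasFDerivAt.hasLineDerivAt v).le_of_eventually_mul_le ?_
  filter_upwards [hu, hline.eventually hmin] with t hut hφt
  linarith

theorem IsLocalMax.fderiv_apply_le_of_sub (hmax : IsLocalMax (fun x => φ x - u x) p)
    (hφ : DifferentiableAt ℝ φ p) (hu : ∀ᶠ t in 𝓝[>] 0, u (p + t • v) - u p ≤ c * t) :
    fderiv ℝ φ p v ≤ c := by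
  have hmin : IsLocalMin (fun x => -φ x - -u x) p := by
    simpa only [neg_sub_neg, neg_sub] using hmax.neg
  have h := hmin.le_fderiv_apply_of_sub hφ.neg (c := -c) (v := v) <| by
    filter_upwards [hu] with t ht
    linarith
  rw [fderiv_fun_neg, neg_apply] at h
  linarith

end LocalExtremum

section AbsSubAbs

variable {α β : ℝ} {φ : ℝ × ℝ → ℝ} {p : ℝ × ℝ}

theorem le_abs_fderiv_fst_of_isLocalMin_sub_abs
    (hmin : IsLocalMin (fun q => φ q - (α * |q.1| - β * |q.2|)) p)
    (hφ : DifferentiableAt ℝ φ p) : α ≤ |fderiv ℝ φ p (1, 0)| := by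
  rcases le_or_gt 0 p.1 with hx | hx
  · have h : α ≤ fderiv ℝ φ p (1, 0) := hmin.le_fderiv_apply_of_sub hφ <|
      eventually_nhdsWithin_of_forall fun t (ht : 0 < t) => by
        simp only [Prod.smul_mk, smul_eq_mul, mul_zero, mul_one, Prod.fst_add, Prod.snd_add,
          add_zero, abs_of_nonneg hx, abs_of_nonneg (add_nonneg hx ht.le)]
        linarith
    exact h.trans (le_abs_self _)
  · have h : α ≤ fderiv ℝ φ p (-1, 0) := hmin.le_fderiv_apply_of_sub hφ <|
      eventually_nhdsWithin_of_forall fun t (ht : 0 < t) => by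
        simp only [Prod.smul_mk, smul_eq_mul, mul_zero, mul_neg, mul_one, Prod.fst_add,
          Prod.snd_add, add_zero, abs_of_neg hx, abs_of_neg (by linarith : p.1 + -t < 0)]
        linarith
    rw [show ((-1 : ℝ), (0 : ℝ)) = -(1, 0) by simp, map_neg] at h
    exact h.trans (neg_le_abs _)

theorem abs_fderiv_snd_le_of_isLocalMin_sub_abs (hβ : 0 ≤ β)
    (hmin : IsLocalMin (fun q => φ q - (α * |q.1| - β * |q.2|)) p)
    (hφ : DifferentiableAt ℝ φ p) : |fderiv ℝ φ p (0, 1)| ≤ β := by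
  have hslope (s : ℝ) (hs : |s| = 1) : ∀ᶠ t in 𝓝[>] 0,
      -β * t ≤ α * |(p + t • (0, s)).1| - β * |(p + t • (0, s)).2| - (α * |p.1| - β * |p.2|) :=
    eventually_nhdsWithin_of_forall fun t (ht : 0 < t) => by
      have h := abs_add_le p.2 (t * s)
      rw [abs_mul, hs, abs_of_pos ht, mul_one] at h
      simp only [Prod.smul_mk, smul_eq_mul, mul_zero, Prod.fst_add, Prod.snd_add, add_zero]
      nlinarith
  have h₁ := hmin.le_fderiv_apply_of_sub hφ (hslope 1 abs_one)
  have h₂ := hmin.le_fderiv_apply_of_sub hφ (hslope (-1) (by simp))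
  rw [show ((0 : ℝ), (-1 : ℝ)) = -(0, 1) by simp, map_neg] at h₂
  exact abs_le.2 ⟨by linarith, by linarith⟩

theorem abs_fderiv_fst_le_of_isLocalMax_sub_abs (hα : 0 ≤ α)
    (hmax : IsLocalMax (fun q => φ q - (α * |q.1| - β * |q.2|)) p)
    (hφ : DifferentiableAt ℝ φ p) : |fderiv ℝ φ p (1, 0)| ≤ α := by
  have hslope (s : ℝ) (hs : |s| = 1) : ∀ᶠ t in 𝓝[>] 0,
      α * |(p + t • (s, 0)).1| - β * |(p + t • (s, 0)).2| - (α * |p.1| - β * |p.2|) ≤ α * t :=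
    eventually_nhdsWithin_of_forall fun t (ht : 0 < t) => by
      have h := abs_add_le p.1 (t * s)
      rw [abs_mul, hs, abs_of_pos ht, mul_one] at h
      simp only [Prod.smul_mk, smul_eq_mul, mul_zero, Prod.fst_add, Prod.snd_add, add_zero]
      nlinarith
  have h₁ := hmax.fderiv_apply_le_of_sub hφ (hslope 1 abs_one)
  have h₂ := hmax.fderiv_apply_le_of_sub hφ (hslope (-1) (by simp))
  rw [show ((-1 : ℝ), (0 : ℝ)) = -(1, 0) by simp, map_neg] at h₂
  exact abs_le.2 ⟨by linarith, by linarith⟩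

theorem le_abs_fderiv_snd_of_isLocalMax_sub_abs
    (hmax : IsLocalMax (fun q => φ q - (α * |q.1| - β * |q.2|)) p)
    (hφ : DifferentiableAt ℝ φ p) : β ≤ |fderiv ℝ φ p (0, 1)| := by
  rcases le_or_gt 0 p.2 with hy | hy
  · have h : fderiv ℝ φ p (0, 1) ≤ -β := hmax.fderiv_apply_le_of_sub hφ <|
      eventually_nhdsWithin_of_forall fun t (ht : 0 < t) => by
        simp only [Prod.smul_mk, smul_eq_mul, mul_zero, mul_one, Prod.fst_add, Prod.snd_add,
          add_zero, abs_of_nonneg hy, abs_of_nonneg (add_nonneg hy ht.le)]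
        linarith
    exact (le_neg.1 h).trans (neg_le_abs _)
  · have h : fderiv ℝ φ p (0, -1) ≤ -β := hmax.fderiv_apply_le_of_sub hφ <|
      eventually_nhdsWithin_of_forall fun t (ht : 0 < t) => by
        simp only [Prod.smul_mk, smul_eq_mul, mul_zero, mul_neg, mul_one, Prod.fst_add,
          Prod.snd_add, add_zero, abs_of_neg hy, abs_of_neg (by linarith : p.2 + -t < 0)]
        linarith
    rw [show ((0 : ℝ), (-1 : ℝ)) = -(0, 1) by simp, map_neg, neg_le_neg_iff] at h
    exact h.trans (le_abs_self _)

end AbsSubAbs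

theorem sq_sub_sq_le_sq_sub_sq_of_le_abs {a b α β : ℝ} (hα : 0 ≤ α) (ha : α ≤ |a|)
    (hb : |b| ≤ β) : α ^ 2 - β ^ 2 ≤ a ^ 2 - b ^ 2 := by
  have h₁ := pow_le_pow_left₀ hα ha 2
  have h₂ := pow_le_pow_left₀ (abs_nonneg b) hb 2
  rw [sq_abs] at h₁ h₂
  linarith

/-- The function `f(x,y) = √2·|x| - |y|` is a viscosity solution of the Lorentzian
eikonal equation on the whole 2-dimensional Minkowski space-time. -/
theorem sqrt_two_abs_x_sub_abs_y_isViscositySolution :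
    IsViscositySolution (fun p => Real.sqrt 2 * |p.1| - |p.2|) Set.univ := by
  have hu : (fun p : ℝ × ℝ => Real.sqrt 2 * |p.1| - |p.2|) =
      fun p => Real.sqrt 2 * |p.1| - 1 * |p.2| := by simp
  have hcoeff : Real.sqrt 2 ^ 2 - 1 ^ 2 = 1 := by norm_num
  rw [hu]
  refine ⟨fun p _ φ U hU hpU _ hφ hφp hle => ?_, fun p _ φ U hU hpU _ hφ hφp hge => ?_⟩
  all_goals have hd : DifferentiableAt ℝ φ p :=
    (hφ.differentiableOn one_ne_zero).differentiableAt (hU.mem_nhds hpU)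
  · have hmin := isLocalMin_sub_of_eq_of_le (hU.mem_nhds hpU) hφp hle
    have := sq_sub_sq_le_sq_sub_sq_of_le_abs (Real.sqrt_nonneg 2)
      (le_abs_fderiv_fst_of_isLocalMin_sub_abs hmin hd)
      (abs_fderiv_snd_le_of_isLocalMin_sub_abs zero_le_one hmin hd)
    linarith
  · have hmax := isLocalMax_sub_of_eq_of_le (hU.mem_nhds hpU) hφp hge
    have := sq_sub_sq_le_sq_sub_sq_of_le_abs zero_le_one
      (le_abs_fderiv_snd_of_isLocalMax_sub_abs hmax hd)
      (abs_fderiv_fst_le_of_isLocalMax_sub_abs (Real.sqrt_nonneg 2) hmax hd)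
    linarith
end

section
/- For each a ∈ (0,1), the curve γ : ((a−2)/2, a/2) → ℝ², γ(t) = (t, t + 1 − a), satisfies: (i) γ(t) ∈ M for every t in its domain; (ii) γ is a future-directed causal curve (γ₁′(t) = 1 > 0 and |γ₂′(t)| = 1 ≤ γ₁′(t)); (iii) γ is inextendible in M, since γ(t) → ((a−2)/2, −a/2) ∉ M as t → ((a−2)/2)⁺ and γ(t) → (a/2, 1 − a/2) ∉ M as t → (a/2)⁻; and (iv) γ₁(t) ≠ a for every t, so γ never meets the level set u_a = {(x,y) ∈ M : x = a} of the viscosity solution u(x,y) = x. Consequently u_a is not a Cauchy surface of M for a ∈ (0,1). -/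
/-! The null line `y = x + 1 - a` is parallel to two edges of the diamond, so it crosses `M`
from the lower-left edge, at `x = (a - 2)/2`, to the upper-right edge, at `x = a/2`. Along the
way its time coordinate stays below `a/2 < a`, so it never reaches the slice `x = a`. -/

/-- The open diamond `M = I⁺((-1,0)) ∩ I⁻((1,0)) = {(x,y) : |y| < 1 - |x|}`
in 2-dimensional Minkowski space-time. -/
def MinkowskiDiamond : Set (ℝ × ℝ) := {p | |p.2| < 1 - |p.1|}

open Filter Set Topology

theorem null_line_mem_minkowskiDiamond_iff {a : ℝ} (ha : a ∈ Ioo (0 : ℝ) 2) (t : ℝ) :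
    (t, t + 1 - a) ∈ MinkowskiDiamond ↔ t ∈ Ioo ((a - 2) / 2) (a / 2) := by
  obtain ⟨ha0, ha2⟩ := ha
  simp only [MinkowskiDiamond, mem_ofPred_eq, mem_Ioo, abs_lt]
  constructor
  · intro h
    constructor <;> cases abs_cases t <;> linarith
  · rintro ⟨h1, h2⟩
    cases abs_cases t <;> constructor <;> linarith

theorem hasDerivAt_null_line (a t : ℝ) :
    HasDerivAt (fun t : ℝ => ((t, t + 1 - a) : ℝ × ℝ)) (1, 1) t :=
  (hasDerivAt_id t).prodMk (((hasDerivAt_id t).add_const 1).sub_const a)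

theorem tendsto_null_line (a s : ℝ) (S : Set ℝ) :
    Tendsto (fun t : ℝ => ((t, t + 1 - a) : ℝ × ℝ)) (𝓝[S] s) (𝓝 (s, s + 1 - a)) :=
  (by fun_prop : Continuous fun t : ℝ => ((t, t + 1 - a) : ℝ × ℝ)).continuousWithinAt

/-- For `a ∈ (0,1)`, the curve `γ(t) = (t, t + 1 - a)` on `I = ((a-2)/2, a/2)` satisfies:
(i) `γ(t) ∈ M` for all `t ∈ I`;
(ii) `γ` is a future-directed causal curve: `γ'(t) = (1,1)` with `γ₁'(t) = 1 > 0` and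
`|γ₂'(t)| = 1 ≤ γ₁'(t)`;
(iii) `γ` is inextendible in `M`: `γ(t) → ((a-2)/2, -a/2) ∉ M` as `t → ((a-2)/2)⁺`
and `γ(t) → (a/2, 1 - a/2) ∉ M` as `t → (a/2)⁻`;
(iv) `γ₁(t) ≠ a` for all `t ∈ I`, so `γ` never meets the level set
`u_a = {(x,y) ∈ M : x = a}` of the viscosity solution `u(x,y) = x`.
Consequently `u_a` is not a Cauchy surface of `M` for `a ∈ (0,1)`. -/
theorem level_set_not_cauchy_surface (a : ℝ) (ha : a ∈ Set.Ioo (0:ℝ) 1) :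
    (∀ t ∈ Set.Ioo ((a - 2) / 2) (a / 2),
        ((fun t : ℝ => (t, t + 1 - a)) t) ∈ MinkowskiDiamond) ∧
    (∀ t : ℝ, HasDerivAt (fun t : ℝ => ((t, t + 1 - a) : ℝ × ℝ)) (1, 1) t ∧
        (0 : ℝ) < (1 : ℝ) ∧ |(1 : ℝ)| ≤ (1 : ℝ)) ∧
    (Filter.Tendsto (fun t : ℝ => ((t, t + 1 - a) : ℝ × ℝ))
        (nhdsWithin ((a - 2) / 2) (Set.Ioo ((a - 2) / 2) (a / 2)))
        (nhds ((a - 2) / 2, -a / 2)) ∧ ((a - 2) / 2, -a / 2) ∉ MinkowskiDiamond) ∧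
    (Filter.Tendsto (fun t : ℝ => ((t, t + 1 - a) : ℝ × ℝ))
        (nhdsWithin (a / 2) (Set.Ioo ((a - 2) / 2) (a / 2)))
        (nhds (a / 2, 1 - a / 2)) ∧ (a / 2, 1 - a / 2) ∉ MinkowskiDiamond) ∧
    (∀ t ∈ Set.Ioo ((a - 2) / 2) (a / 2), t ≠ a) := by
  have hM := null_line_mem_minkowskiDiamond_iff (a := a) ⟨ha.1, by linarith [ha.2]⟩
  have left_end : (-a / 2 : ℝ) = (a - 2) / 2 + 1 - a := by ring
  have right_end : (1 - a / 2 : ℝ) = a / 2 + 1 - a := by ring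
  refine ⟨fun t ht => (hM t).2 ht, fun t => ⟨hasDerivAt_null_line a t, one_pos, abs_one.le⟩,
    ⟨?_, ?_⟩, ⟨?_, ?_⟩, fun t ht => (ht.2.trans (half_lt_self ha.1)).ne⟩
  · rw [left_end]; exact tendsto_null_line a _ _
  · rw [left_end, hM]; exact fun h => lt_irrefl _ h.1
  · rw [right_end]; exact tendsto_null_line a _ _
  · rw [right_end, hM]; exact fun h => lt_irrefl _ h.2
end

section
/- Let I = (α, β) be an open interval and γ : I → ℝ² a C¹ future-directed causal curve (γ₁′(t) > 0 and |γ₂′(t)| ≤ γ₁′(t) for all t) with γ(t) ∈ M for all t ∈ I. Assume γ is inextendible in M: there is no point p ∈ M such that γ(t) → p as t tends to the right endpoint β, and no point p ∈ M such that γ(t) → p as t tends to the left endpoint α. Then there is exactly one t ∈ I with γ₁(t) = 0; that is, γ meets the set u₀ = {(0,y) : |y| < 1} exactly once. Hence the level set u₀ of the viscosity solution u(x,y) = x is a Cauchy surface of M. -/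
/-- Let `γ : (α, β) → ℝ²` be a C¹ future-directed causal curve (`γ₁' > 0`,
`|γ₂'| ≤ γ₁'`) lying in the diamond `M`, inextendible in `M` (no point of `M` is a
limit of `γ(t)` as `t` tends to either endpoint). Then there is exactly one `t` in
`(α, β)` with `γ₁(t) = 0`, i.e. `γ` meets the level set `u₀ = {(0,y) : |y| < 1}` of the
viscosity solution `u(x,y) = x` exactly once; hence `u₀` is a Cauchy surface of `M`. -/
theorem level_set_zero_is_cauchy_surface (α β : ℝ) (γ γ' : ℝ → ℝ × ℝ)
    (hderiv : ∀ t ∈ Set.Ioo α β, HasDerivAt γ (γ' t) t)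
    (hC1 : ContinuousOn γ' (Set.Ioo α β))
    (hcausal : ∀ t ∈ Set.Ioo α β, 0 < (γ' t).1 ∧ |(γ' t).2| ≤ (γ' t).1)
    (hmem : ∀ t ∈ Set.Ioo α β, γ t ∈ MinkowskiDiamond)
    (hright : ¬ ∃ p ∈ MinkowskiDiamond,
      Filter.Tendsto γ (nhdsWithin β (Set.Ioo α β)) (nhds p))
    (hleft : ¬ ∃ p ∈ MinkowskiDiamond,
      Filter.Tendsto γ (nhdsWithin α (Set.Ioo α β)) (nhds p)) :
    ∃! t, t ∈ Set.Ioo α β ∧ (γ t).1 = 0 := by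
  classical
  -- Notation
  set I := Set.Ioo α β with hI
  -- the interval is nonempty, otherwise `hleft` is violated trivially
  by_cases hαβ : α < β
  swap
  · exfalso
    apply hleft
    refine ⟨(0, 0), by simp [MinkowskiDiamond], ?_⟩
    have : Set.Ioo α β = ∅ := Set.Ioo_eq_empty hαβ
    rw [hI, this, nhdsWithin_empty]
    exact Filter.tendsto_bot
  -- component functions and their derivatives
  set f : ℝ → ℝ := fun t => (γ t).1 with hf_def
  set g : ℝ → ℝ := fun t => (γ t).2 with hg_def
  have hf : ∀ t ∈ I, HasDerivAt f (γ' t).1 t := by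
    intro t ht
    have h := ((hderiv t ht).hasFDerivAt.fst).hasDerivAt
    simpa [hf_def] using h
  have hg : ∀ t ∈ I, HasDerivAt g (γ' t).2 t := by
    intro t ht
    have h := ((hderiv t ht).hasFDerivAt.snd).hasDerivAt
    simpa [hg_def] using h
  have hfc : ContinuousOn f I := fun t ht => ((hf t ht).continuousAt).continuousWithinAt
  have hgc : ContinuousOn g I := fun t ht => ((hg t ht).continuousAt).continuousWithinAt
  have hIconv : Convex ℝ I := convex_Ioo α β
  have hIint : interior I = I := interior_Ioo
  -- f is strictly monotone on I
  have hfmono : StrictMonoOn f I := by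
    apply strictMonoOn_of_hasDerivWithinAt_pos hIconv hfc
    · intro x hx
      rw [hIint] at hx ⊢
      exact (hf x hx).hasDerivWithinAt
    · intro x hx
      rw [hIint] at hx
      exact (hcausal x hx).1
  -- the auxiliary monotone functions f + g and f - g
  have hplus : MonotoneOn (fun t => f t + g t) I := by
    apply monotoneOn_of_deriv_nonneg hIconv (hfc.add hgc)
    · intro x hx
      rw [hIint] at hx
      exact ((hf x hx).add (hg x hx)).differentiableAt.differentiableWithinAt
    · intro x hx
      rw [hIint] at hx
      rw [((hf x hx).add (hg x hx)).deriv]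
      have := (hcausal x hx).2
      have := abs_le.1 this
      linarith [this.1]
  have hminus : MonotoneOn (fun t => f t - g t) I := by
    apply monotoneOn_of_deriv_nonneg hIconv (hfc.sub hgc)
    · intro x hx
      rw [hIint] at hx
      exact ((hf x hx).sub (hg x hx)).differentiableAt.differentiableWithinAt
    · intro x hx
      rw [hIint] at hx
      rw [((hf x hx).sub (hg x hx)).deriv]
      have := abs_le.1 (hcausal x hx).2
      linarith [this.2]
  -- bounds from membership in the diamond
  have hbound : ∀ t ∈ I, |g t| < 1 - |f t| := fun t ht => hmem t ht
  -- the Lipschitz-type estimate: for s ≤ t in I, |g t - g s| ≤ f t - f s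
  have hlip : ∀ s ∈ I, ∀ t ∈ I, s ≤ t → |g t - g s| ≤ f t - f s := by
    intro s hs t ht hst
    have h1 := hplus hs ht hst
    have h2 := hminus hs ht hst
    rw [abs_le]
    constructor <;> dsimp only at h1 h2 <;> linarith
  -- bounds: |f t| < 1, |f t + g t| < 1, |f t - g t| < 1
  have habs : ∀ t ∈ I, |f t + g t| ≤ 1 ∧ |f t - g t| ≤ 1 := by
    intro t ht
    have h := hbound t ht
    have hsum : |f t| + |g t| < 1 := by linarith
    have h1 : |f t + g t| ≤ |f t| + |g t| := abs_add_le _ _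
    have h2 : |f t - g t| ≤ |f t| + |g t| := by
      have := abs_add_le (f t) (-(g t))
      rw [abs_neg] at this
      simpa [sub_eq_add_neg] using this
    exact ⟨by linarith, by linarith⟩
  -- midpoint
  set t₀ : ℝ := (α + β) / 2 with ht₀_def
  have ht₀ : t₀ ∈ I := ⟨by simp only [ht₀_def]; linarith, by simp only [ht₀_def]; linarith⟩
  have hne : I.Nonempty := ⟨t₀, ht₀⟩
  have hbddB : BddBelow ((fun t => f t + g t) '' I) := by
    refine ⟨-1, ?_⟩
    rintro y ⟨t, ht, rfl⟩
    have := abs_le.1 (habs t ht).1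
    simpa using this.1
  have hbddB' : BddBelow ((fun t => f t - g t) '' I) := by
    refine ⟨-1, ?_⟩
    rintro y ⟨t, ht, rfl⟩
    have := abs_le.1 (habs t ht).2
    simpa using this.1
  have hbddA : BddAbove ((fun t => f t + g t) '' I) := by
    refine ⟨1, ?_⟩
    rintro y ⟨t, ht, rfl⟩
    simpa using (abs_le.1 (habs t ht).1).2
  have hbddA' : BddAbove ((fun t => f t - g t) '' I) := by
    refine ⟨1, ?_⟩
    rintro y ⟨t, ht, rfl⟩
    simpa using (abs_le.1 (habs t ht).2).2
  -- KEY LEFT: if f is everywhere positive, γ converges in M at the left endpoint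
  have key_left : (∀ t ∈ I, 0 < f t) → False := by
    intro hpos
    apply hleft
    have hfl : nhdsWithin α I = nhdsWithin α (Set.Ioi α) := by
      rw [hI]; exact nhdsWithin_Ioo_eq_nhdsGT hαβ
    haveI : (nhdsWithin α I).NeBot := by rw [hfl]; exact nhdsGT_neBot α
    have Tp : Filter.Tendsto (fun t => f t + g t) (nhdsWithin α I)
        (nhds (sInf ((fun t => f t + g t) '' I))) := by
      rw [hfl]
      exact MonotoneOn.tendsto_nhdsWithin_Ioo_right hne hplus hbddB
    have Tm : Filter.Tendsto (fun t => f t - g t) (nhdsWithin α I)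
        (nhds (sInf ((fun t => f t - g t) '' I))) := by
      rw [hfl]
      exact MonotoneOn.tendsto_nhdsWithin_Ioo_right hne hminus hbddB'
    set Lp := sInf ((fun t => f t + g t) '' I)
    set Lm := sInf ((fun t => f t - g t) '' I)
    set L₁ := (Lp + Lm) / 2 with hL₁def
    set L₂ := (Lp - Lm) / 2 with hL₂def
    have Tf : Filter.Tendsto f (nhdsWithin α I) (nhds L₁) := by
      have := (Tp.add Tm).div_const 2
      exact this.congr (fun t => by
        show ((f t + g t) + (f t - g t)) / 2 = f t; ring)
    have Tg : Filter.Tendsto g (nhdsWithin α I) (nhds L₂) := by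
      have := (Tp.sub Tm).div_const 2
      exact this.congr (fun t => by
        show ((f t + g t) - (f t - g t)) / 2 = g t; ring)
    have Tγ : Filter.Tendsto γ (nhdsWithin α I) (nhds (L₁, L₂)) :=
      (Tf.prodMk_nhds Tg).congr (fun t => rfl)
    refine ⟨(L₁, L₂), ?_, Tγ⟩
    -- show (L₁, L₂) ∈ M
    have hIev : ∀ᶠ s in nhdsWithin α I, s ∈ I := self_mem_nhdsWithin
    have hL₁nn : 0 ≤ L₁ :=
      ge_of_tendsto Tf (hIev.mono fun s hs => (hpos s hs).le)
    -- eventually s ≤ t₀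
    have hslt : ∀ᶠ s in nhdsWithin α I, s < t₀ :=
      nhdsWithin_le_nhds (Iio_mem_nhds ht₀.1)
    have hest : |g t₀ - L₂| ≤ f t₀ - L₁ := by
      have T1 : Filter.Tendsto (fun s => |g t₀ - g s|) (nhdsWithin α I)
          (nhds |g t₀ - L₂|) := (Filter.Tendsto.sub tendsto_const_nhds Tg).abs
      have T2 : Filter.Tendsto (fun s => f t₀ - f s) (nhdsWithin α I)
          (nhds (f t₀ - L₁)) := Filter.Tendsto.sub tendsto_const_nhds Tf
      refine le_of_tendsto_of_tendsto T1 T2 ?_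
      filter_upwards [hIev, hslt] with s hs hst
      exact hlip s hs t₀ ht₀ hst.le
    have hb := hbound t₀ ht₀
    have hft₀ : |f t₀| = f t₀ := abs_of_pos (hpos t₀ ht₀)
    have h1 : |L₂| ≤ |L₂ - g t₀| + |g t₀| := by
      have := abs_add_le (L₂ - g t₀) (g t₀)
      simpa using this
    rw [abs_sub_comm] at h1
    show |L₂| < 1 - |L₁|
    rw [abs_of_nonneg hL₁nn]
    calc |L₂| ≤ |g t₀ - L₂| + |g t₀| := h1
      _ ≤ (f t₀ - L₁) + |g t₀| := by linarith
      _ < (f t₀ - L₁) + (1 - |f t₀|) := by linarith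
      _ = 1 - L₁ := by rw [hft₀]; ring
  -- KEY RIGHT: if f is everywhere negative, γ converges in M at the right endpoint
  have key_right : (∀ t ∈ I, f t < 0) → False := by
    intro hneg
    apply hright
    have hfl : nhdsWithin β I = nhdsWithin β (Set.Iio β) := by
      rw [hI]; exact nhdsWithin_Ioo_eq_nhdsLT hαβ
    haveI : (nhdsWithin β I).NeBot := by rw [hfl]; exact nhdsLT_neBot β
    have Tp : Filter.Tendsto (fun t => f t + g t) (nhdsWithin β I)
        (nhds (sSup ((fun t => f t + g t) '' I))) := by
      rw [hfl]
      exact MonotoneOn.tendsto_nhdsWithin_Ioo_left hne hplus hbddA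
    have Tm : Filter.Tendsto (fun t => f t - g t) (nhdsWithin β I)
        (nhds (sSup ((fun t => f t - g t) '' I))) := by
      rw [hfl]
      exact MonotoneOn.tendsto_nhdsWithin_Ioo_left hne hminus hbddA'
    set Lp := sSup ((fun t => f t + g t) '' I)
    set Lm := sSup ((fun t => f t - g t) '' I)
    set L₁ := (Lp + Lm) / 2 with hL₁def
    set L₂ := (Lp - Lm) / 2 with hL₂def
    have Tf : Filter.Tendsto f (nhdsWithin β I) (nhds L₁) := by
      have := (Tp.add Tm).div_const 2
      exact this.congr (fun t => by
        show ((f t + g t) + (f t - g t)) / 2 = f t; ring)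
    have Tg : Filter.Tendsto g (nhdsWithin β I) (nhds L₂) := by
      have := (Tp.sub Tm).div_const 2
      exact this.congr (fun t => by
        show ((f t + g t) - (f t - g t)) / 2 = g t; ring)
    have Tγ : Filter.Tendsto γ (nhdsWithin β I) (nhds (L₁, L₂)) :=
      (Tf.prodMk_nhds Tg).congr (fun t => rfl)
    refine ⟨(L₁, L₂), ?_, Tγ⟩
    have hIev : ∀ᶠ s in nhdsWithin β I, s ∈ I := self_mem_nhdsWithin
    have hL₁np : L₁ ≤ 0 :=
      le_of_tendsto Tf (hIev.mono fun s hs => (hneg s hs).le)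
    have hslt : ∀ᶠ s in nhdsWithin β I, t₀ < s :=
      nhdsWithin_le_nhds (Ioi_mem_nhds ht₀.2)
    have hest : |L₂ - g t₀| ≤ L₁ - f t₀ := by
      have T1 : Filter.Tendsto (fun s => |g s - g t₀|) (nhdsWithin β I)
          (nhds |L₂ - g t₀|) := (Filter.Tendsto.sub Tg tendsto_const_nhds).abs
      have T2 : Filter.Tendsto (fun s => f s - f t₀) (nhdsWithin β I)
          (nhds (L₁ - f t₀)) := Filter.Tendsto.sub Tf tendsto_const_nhds
      refine le_of_tendsto_of_tendsto T1 T2 ?_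
      filter_upwards [hIev, hslt] with s hs hst
      exact hlip t₀ ht₀ s hs hst.le
    have hb := hbound t₀ ht₀
    have hft₀ : |f t₀| = -f t₀ := abs_of_neg (hneg t₀ ht₀)
    have h1 : |L₂| ≤ |L₂ - g t₀| + |g t₀| := by
      have := abs_add_le (L₂ - g t₀) (g t₀)
      simpa using this
    show |L₂| < 1 - |L₁|
    rw [abs_of_nonpos hL₁np]
    calc |L₂| ≤ |L₂ - g t₀| + |g t₀| := h1
      _ ≤ (L₁ - f t₀) + |g t₀| := by linarith
      _ < (L₁ - f t₀) + (1 - |f t₀|) := by linarith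
      _ = 1 - -L₁ := by rw [hft₀]; ring
  -- EXISTENCE
  have hex : ∃ c ∈ I, f c = 0 := by
    by_cases hex1 : ∃ t ∈ I, f t ≤ 0
    · by_cases hex2 : ∃ t ∈ I, 0 ≤ f t
      · obtain ⟨a, ha, hfa⟩ := hex1
        obtain ⟨b, hb, hfb⟩ := hex2
        have hab : a ≤ b := by
          by_contra h
          push_neg at h
          have := hfmono hb ha h
          linarith
        have hsub : Set.Icc a b ⊆ I := by
          rw [hI]; exact Set.Icc_subset_Ioo ha.1 hb.2
        have h0 : (0 : ℝ) ∈ Set.Icc (f a) (f b) := ⟨hfa, hfb⟩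
        obtain ⟨c, hc, hc0⟩ := intermediate_value_Icc hab (hfc.mono hsub) h0
        exact ⟨c, hsub hc, hc0⟩
      · push_neg at hex2
        exact absurd hex2 (fun h => key_right h)
    · push_neg at hex1
      exact absurd hex1 (fun h => key_left h)
  obtain ⟨c, hc, hc0⟩ := hex
  refine ⟨c, ⟨hc, hc0⟩, ?_⟩
  rintro y ⟨hy, hy0⟩
  exact hfmono.injOn hy hc (by rw [hc0]; exact hy0)
end

section
/- Let E be a real inner product space and let V = (a, v) ∈ ℝ × E be a nonzero past-directed non-spacelike vector, i.e. a < 0 and ‖v‖ ≤ |a|. Suppose that g(V, W) ≥ √(−g(W,W)) for every future-directed causal vector W = (b, w) (b > 0, ‖w‖ ≤ b), where g((a,v),(b,w)) = −ab + ⟪v,w⟫. Then V is timelike and not lightlike: ‖v‖ < |a|, i.e. g(V,V) < 0. -/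
open scoped RealInnerProductSpace

/-!
If `‖v‖ ≥ -a`, test the hypothesis on `W = (b, u)` with `u` the unit vector opposite to `v`:
then `g(V, W) ≤ -a (b - 1)`, whereas `√(-g(W, W)) = √(b² - 1)` is of order `√(b - 1)`
and so wins for `b` close to `1`.
-/

/-- `b = 1 + ε` with `ε = 1 / (c² + 1)` works since `(c ε)² < ε < 2ε + ε²`. -/
lemma exists_mul_sub_one_lt_sqrt_sq_sub_one (c : ℝ) :
    ∃ b : ℝ, 1 ≤ b ∧ c * (b - 1) < √(b ^ 2 - 1) := by
  set ε := 1 / (c ^ 2 + 1) with hε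
  have hε_pos : 0 < ε := by positivity
  have hcε : c ^ 2 * ε = 1 - ε := by rw [hε]; field_simp; ring
  refine ⟨1 + ε, by linarith, ?_⟩
  calc c * (1 + ε - 1) ≤ |c * ε| := by rw [add_sub_cancel_left]; exact le_abs_self _
    _ = √((c * ε) ^ 2) := (Real.sqrt_sq_eq_abs _).symm
    _ < √((1 + ε) ^ 2 - 1) := by
        apply Real.sqrt_lt_sqrt (sq_nonneg _)
        nlinarith

lemma exists_norm_eq_one_inner_eq_neg_norm {E : Type*} [NormedAddCommGroup E]
    [InnerProductSpace ℝ E] {v : E} (hv : v ≠ 0) : ∃ u : E, ‖u‖ = 1 ∧ ⟪v, u⟫ = -‖v‖ := by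
  refine ⟨-(‖v‖⁻¹ • v), by rw [norm_neg]; exact norm_smul_inv_norm (𝕜 := ℝ) hv, ?_⟩
  have hv' : ‖v‖ ≠ 0 := norm_ne_zero_iff.mpr hv
  rw [inner_neg_right, real_inner_smul_right, real_inner_self_eq_norm_sq]
  field_simp

theorem past_nonspacelike_is_timelike_general
    {E : Type*} [NormedAddCommGroup E] [InnerProductSpace ℝ E]
    (a : ℝ) (v : E) (ha : a < 0)
    (h : ∀ (b : ℝ) (w : E), 0 < b → ‖w‖ ≤ b →
      Real.sqrt (-(-(b * b) + ⟪w, w⟫)) ≤ -(a * b) + ⟪v, w⟫) :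
    ‖v‖ < |a| ∧ -(a * a) + ⟪v, v⟫ < 0 := by
  rw [abs_of_neg ha, real_inner_self_eq_norm_sq]
  have hv : ‖v‖ < -a := by
    by_contra! hge
    obtain ⟨u, hu, hvu⟩ := exists_norm_eq_one_inner_eq_neg_norm (norm_pos_iff.mp (by linarith))
    obtain ⟨b, hb1, hb⟩ := exists_mul_sub_one_lt_sqrt_sq_sub_one (-a)
    have hW := h b u (by linarith) (hu ▸ hb1)
    rw [real_inner_self_eq_norm_sq, hu, hvu, show -(-(b * b) + 1 ^ 2) = b ^ 2 - 1 by ring] at hW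
    linarith
  exact ⟨hv, by nlinarith [norm_nonneg v]⟩

/-- Let `V = (a, v) ∈ ℝ × E` be a nonzero past-directed non-spacelike vector
(`a < 0`, `‖v‖ ≤ |a|`) for the Minkowski form `g((a,v),(b,w)) = -ab + ⟪v,w⟫`.
If `g(V, W) ≥ √(-g(W,W))` for every future-directed causal vector `W = (b, w)`
(`b > 0`, `‖w‖ ≤ b`), then `V` is timelike and not lightlike:
`‖v‖ < |a|`, i.e. `g(V,V) = -a² + ‖v‖² < 0`. -/
theorem past_nonspacelike_is_timelike
    {E : Type*} [NormedAddCommGroup E] [InnerProductSpace ℝ E]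
    (a : ℝ) (v : E) (ha : a < 0) (hav : ‖v‖ ≤ |a|)
    (h : ∀ (b : ℝ) (w : E), 0 < b → ‖w‖ ≤ b →
      Real.sqrt (-(-(b * b) + ⟪w, w⟫)) ≤ -(a * b) + ⟪v, w⟫) :
    ‖v‖ < |a| ∧ -(a * a) + ⟪v, v⟫ < 0 :=
  past_nonspacelike_is_timelike_general a v ha h
end

section
/- (Reverse Cauchy–Schwarz inequality for causal vectors.) Let E be a real inner product space and let V = (a, v) and W = (b, w) be future-directed causal vectors in ℝ × E (a > 0, ‖v‖ ≤ a, b > 0, ‖w‖ ≤ b). Then g(V, W) ≤ −√(−g(V,V)) · √(−g(W,W)); equivalently, ab − ⟪v,w⟫ ≥ √(a² − ‖v‖²) · √(b² − ‖w‖²) ≥ 0. -/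
open scoped RealInnerProductSpace

/-- Reverse Cauchy–Schwarz inequality for future-directed causal vectors in `ℝ × E`
with the Minkowski form `g((a,v),(b,w)) = -ab + ⟪v,w⟫`: if `V = (a,v)` and `W = (b,w)`
are future-directed causal (`a > 0`, `‖v‖ ≤ a`, `b > 0`, `‖w‖ ≤ b`), then
`g(V,W) ≤ -√(-g(V,V))·√(-g(W,W))`; equivalently
`ab - ⟪v,w⟫ ≥ √(a² - ‖v‖²)·√(b² - ‖w‖²) ≥ 0`. -/
theorem reverse_cauchy_schwarz
    {E : Type*} [NormedAddCommGroup E] [InnerProductSpace ℝ E]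
    (a b : ℝ) (v w : E) (ha : 0 < a) (hv : ‖v‖ ≤ a) (hb : 0 < b) (hw : ‖w‖ ≤ b) :
    Real.sqrt (a ^ 2 - ‖v‖ ^ 2) * Real.sqrt (b ^ 2 - ‖w‖ ^ 2) ≤ a * b - ⟪v, w⟫ ∧
    0 ≤ Real.sqrt (a ^ 2 - ‖v‖ ^ 2) * Real.sqrt (b ^ 2 - ‖w‖ ^ 2) := by
  have hv0 : (0:ℝ) ≤ ‖v‖ := norm_nonneg v
  have hw0 : (0:ℝ) ≤ ‖w‖ := norm_nonneg w
  have h1 : (0:ℝ) ≤ a ^ 2 - ‖v‖ ^ 2 := by nlinarith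
  have h2 : (0:ℝ) ≤ b ^ 2 - ‖w‖ ^ 2 := by nlinarith
  have hnn : 0 ≤ Real.sqrt (a ^ 2 - ‖v‖ ^ 2) * Real.sqrt (b ^ 2 - ‖w‖ ^ 2) :=
    mul_nonneg (Real.sqrt_nonneg _) (Real.sqrt_nonneg _)
  refine ⟨?_, hnn⟩
  have hcs : ⟪v, w⟫ ≤ ‖v‖ * ‖w‖ := real_inner_le_norm v w
  have hmul : (0:ℝ) ≤ a * b - ‖v‖ * ‖w‖ := by nlinarith
  have key : Real.sqrt (a ^ 2 - ‖v‖ ^ 2) * Real.sqrt (b ^ 2 - ‖w‖ ^ 2)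
      ≤ a * b - ‖v‖ * ‖w‖ := by
    rw [← Real.sqrt_mul h1]
    rw [show a * b - ‖v‖ * ‖w‖ = Real.sqrt ((a * b - ‖v‖ * ‖w‖) ^ 2) from
      (Real.sqrt_sq hmul).symm]
    apply Real.sqrt_le_sqrt
    nlinarith [sq_nonneg (a * ‖w‖ - b * ‖v‖)]
  linarith
end

section
/- Let U be an open convex subset of ℝⁿ, f : U → ℝ a continuous function, and L > 0. Suppose that for each p ∈ U there exist an open neighborhood N_p ⊆ U of p and a continuously differentiable lower support function f_p : N_p → ℝ such that f_p(p) = f(p), f_p(x) ≤ f(x) for all x ∈ N_p, and ‖∇f_p(p)‖ < L. Then f is Lipschitz continuous with constant L on U: |f(x) − f(y)| ≤ L‖x − y‖ for all x, y ∈ U. -/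
/-!
Near each point `p` the C¹ minorant is `L`-Lipschitz, and since it touches `f` at `p`, `f` can
drop below `f p` by at most `L` per unit distance near `p`. Along a segment this one-sided local
bound says that the right lower Dini derivative of `t ↦ -f (x + t • (y - x))` is at most
`L * ‖y - x‖`, so for the continuous function it integrates to the global bound
`f x - f y ≤ L * ‖x - y‖`; exchanging `x` and `y` gives the Lipschitz estimate.
-/

open Filter Set Topology

theorem HasStrictFDerivAt.eventually_sub_le_of_le {E : Type*} [NormedAddCommGroup E]
    [NormedSpace ℝ E] {f g : E → ℝ} {g' : E →L[ℝ] ℝ} {p : E} {L : ℝ}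
    (hg : HasStrictFDerivAt g g' p) (hg' : ‖g'‖ < L) (hgp : g p = f p)
    (hgf : ∀ᶠ z in 𝓝 p, g z ≤ f z) :
    ∀ᶠ z in 𝓝 p, f p - f z ≤ L * ‖p - z‖ := by
  have hL : (L.toNNReal : ℝ) = L := Real.coe_toNNReal _ ((norm_nonneg _).trans hg'.le)
  obtain ⟨s, hs, hlip⟩ :=
    hg.exists_lipschitzOnWith_of_nnnorm_lt L.toNNReal (Real.lt_toNNReal_iff_coe_lt.2 hg')
  filter_upwards [hs, hgf] with z hzs hgz
  have hdist := hlip.dist_le_mul p (mem_of_mem_nhds hs) z hzs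
  rw [hL, Real.dist_eq, dist_eq_norm] at hdist
  linarith [le_abs_self (g p - g z)]

theorem sub_le_mul_sub_of_eventually_nhdsGT {g : ℝ → ℝ} {a b C : ℝ} (hab : a ≤ b)
    (hg : ContinuousOn g (Icc a b))
    (h : ∀ t ∈ Ico a b, ∀ᶠ s in 𝓝[>] t, g s - g t ≤ C * (s - t)) :
    g b - g a ≤ C * (b - a) := by
  refine image_le_of_liminf_slope_right_le_deriv_boundary (f := fun t => g t - g a)
    (B := fun t => C * (t - a)) (hg.sub continuousOn_const) (by simp) (by fun_prop)
    (fun t _ => (((hasDerivWithinAt_id t _).sub_const a).const_mul C).congr_deriv (mul_one C))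
    (fun t ht r hr => ?_) (right_mem_Icc.2 hab)
  refine (h t ht).and self_mem_nhdsWithin |>.mono (fun s ⟨hs, hts⟩ => ?_) |>.frequently
  rw [slope_def_field, div_lt_iff₀ (sub_pos.2 hts)]
  simp only [sub_sub_sub_cancel_right]
  nlinarith [sub_pos.2 hts]

theorem Convex.sub_le_mul_norm_of_eventually {E : Type*} [NormedAddCommGroup E]
    [NormedSpace ℝ E] {U : Set E} {f : E → ℝ} {L : ℝ} (hU : Convex ℝ U)
    (hf : ContinuousOn f U) (h : ∀ p ∈ U, ∀ᶠ z in 𝓝 p, f p - f z ≤ L * ‖p - z‖)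
    {x y : E} (hx : x ∈ U) (hy : y ∈ U) :
    f x - f y ≤ L * ‖x - y‖ := by
  set γ : ℝ → E := fun t => x + t • (y - x)
  have hγU : ∀ t ∈ Icc (0 : ℝ) 1, γ t ∈ U := fun t ht => hU.add_smul_sub_mem hx hy ht
  have hγ : Continuous γ := by fun_prop
  have key := sub_le_mul_sub_of_eventually_nhdsGT (g := fun t => -f (γ t)) (C := L * ‖y - x‖)
    zero_le_one (hf.comp hγ.continuousOn hγU).neg fun t ht => ?_
  · simp only [γ, zero_smul, add_zero, one_smul, add_sub_cancel, sub_zero, mul_one] at key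
    rw [norm_sub_rev]
    linarith
  have hlim : Tendsto γ (𝓝[>] t) (𝓝 (γ t)) := hγ.continuousAt.tendsto.mono_left nhdsWithin_le_nhds
  filter_upwards [hlim.eventually (h _ (hγU t (Ico_subset_Icc_self ht))), self_mem_nhdsWithin]
    with s hs hts
  have : γ t - γ s = (t - s) • (y - x) := by simp only [γ]; module
  rw [this, norm_smul, Real.norm_of_nonpos (sub_nonpos.2 (le_of_lt hts))] at hs
  linarith

theorem lipschitz_of_lower_support_general
    (n : ℕ) (U : Set (EuclideanSpace ℝ (Fin n)))
    (hUconv : Convex ℝ U) (f : EuclideanSpace ℝ (Fin n) → ℝ)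
    (hf : ContinuousOn f U) (L : ℝ)
    (hsupp : ∀ p ∈ U, ∃ N : Set (EuclideanSpace ℝ (Fin n)),
      IsOpen N ∧ p ∈ N ∧ N ⊆ U ∧ ∃ fp : EuclideanSpace ℝ (Fin n) → ℝ,
        ContDiffOn ℝ 1 fp N ∧ fp p = f p ∧ (∀ x ∈ N, fp x ≤ f x) ∧
        ‖gradient fp p‖ < L) :
    ∀ x ∈ U, ∀ y ∈ U, |f x - f y| ≤ L * ‖x - y‖ := by
  have hloc : ∀ p ∈ U, ∀ᶠ z in 𝓝 p, f p - f z ≤ L * ‖p - z‖ := by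
    intro p hp
    obtain ⟨N, hNo, hpN, -, fp, hC1, hfpp, hle, hgrad⟩ := hsupp p hp
    have hN : N ∈ 𝓝 p := hNo.mem_nhds hpN
    refine ((hC1.contDiffAt hN).hasStrictFDerivAt one_ne_zero).eventually_sub_le_of_le ?_ hfpp
      (eventually_of_mem hN hle)
    rwa [← toDual_gradient, LinearIsometryEquiv.norm_map]
  intro x hx y hy
  rw [abs_sub_le_iff]
  exact ⟨hUconv.sub_le_mul_norm_of_eventually hf hloc hx hy,
    norm_sub_rev x y ▸ hUconv.sub_le_mul_norm_of_eventually hf hloc hy hx⟩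

/-- Let `U` be an open convex subset of `ℝⁿ`, `f : U → ℝ` continuous, `L > 0`.
If every `p ∈ U` admits an open neighborhood `N ⊆ U` and a C¹ lower support
function `fp : N → ℝ` (`fp p = f p`, `fp ≤ f` on `N`) with `‖∇fp(p)‖ < L`, then
`f` is Lipschitz with constant `L` on `U`: `|f x - f y| ≤ L‖x - y‖`. -/
theorem lipschitz_of_lower_support
    (n : ℕ) (U : Set (EuclideanSpace ℝ (Fin n))) (hUopen : IsOpen U)
    (hUconv : Convex ℝ U) (f : EuclideanSpace ℝ (Fin n) → ℝ)
    (hf : ContinuousOn f U) (L : ℝ) (hL : 0 < L)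
    (hsupp : ∀ p ∈ U, ∃ N : Set (EuclideanSpace ℝ (Fin n)),
      IsOpen N ∧ p ∈ N ∧ N ⊆ U ∧ ∃ fp : EuclideanSpace ℝ (Fin n) → ℝ,
        ContDiffOn ℝ 1 fp N ∧ fp p = f p ∧ (∀ x ∈ N, fp x ≤ f x) ∧
        ‖gradient fp p‖ < L) :
    ∀ x ∈ U, ∀ y ∈ U, |f x - f y| ≤ L * ‖x - y‖ :=
  lipschitz_of_lower_support_general n U hUconv f hf L hsupp
end

section
/- Let u : ℝ² → ℝ be locally semiconcave, and suppose that for Lebesgue-almost every p ∈ ℝ², u is differentiable at p with ∂u/∂x(p) > 0 and (∂u/∂x(p))² − (∂u/∂y(p))² = 1. Then u is a viscosity solution of the Lorentzian eikonal equation g(∇u,∇u) = −1 on the 2-dimensional Minkowski space-time ℝ². -/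
/-- `u : ℝ² → ℝ` is locally semiconcave: every point has a convex open neighborhood on
which `u` is semiconcave with some constant `C ≥ 0` (Euclidean norm, written as a sum
of squares). -/
def LocallySemiconcave (u : ℝ × ℝ → ℝ) : Prop :=
  ∀ p : ℝ × ℝ, ∃ O : Set (ℝ × ℝ), IsOpen O ∧ Convex ℝ O ∧ p ∈ O ∧ ∃ C : ℝ, 0 ≤ C ∧
    ∀ x ∈ O, ∀ y ∈ O, ∀ t ∈ Set.Icc (0:ℝ) 1,
      (1 - t) * u x + t * u y
          - C / 2 * t * (1 - t) * ((x.1 - y.1) ^ 2 + (x.2 - y.2) ^ 2) ≤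
        u ((1 - t) • x + t • y)

open Filter Topology MeasureTheory

section RescaledLimits

variable {E F α : Type*} [NormedAddCommGroup E] [NormedSpace ℝ E]
  {l : Filter α} {c : α → ℝ} {y : α → E} {x v : E}

theorem tendsto_of_tendsto_smul_sub (hc : Tendsto c l atTop)
    (hy : Tendsto (fun n => c n • (y n - x)) l (𝓝 v)) : Tendsto y l (𝓝 x) := by
  have h0 : Tendsto (fun n => (c n)⁻¹ • (c n • (y n - x))) l (𝓝 ((0 : ℝ) • v)) :=
    (tendsto_inv_atTop_zero.comp hc).smul hy
  rw [zero_smul] at h0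
  have h1 : Tendsto (fun n => x + (y n - x)) l (𝓝 (x + 0)) := by
    refine tendsto_const_nhds.add (h0.congr' ?_)
    filter_upwards [hc.eventually_ne_atTop 0] with n hn
    rw [inv_smul_smul₀ hn]
  simpa using h1

theorem HasFDerivAt.tendsto_smul_sub [NormedAddCommGroup F] [NormedSpace ℝ F] {f : E → F}
    {f' : E →L[ℝ] F} (hf : HasFDerivAt f f' x) (hc : Tendsto c l atTop)
    (hy : Tendsto (fun n => c n • (y n - x)) l (𝓝 v)) :
    Tendsto (fun n => c n • (f (y n) - f x)) l (𝓝 (f' v)) := by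
  have hd : Tendsto (fun n => y n - x) l (𝓝 0) := by
    simpa using (tendsto_of_tendsto_smul_sub hc hy).sub_const x
  simpa using hf.hasFDerivWithinAt.lim (s := Set.univ) hd (.of_forall fun _ => Set.mem_univ _) hy

theorem exists_seq_forall_tendsto_smul_sub_of_ae [MeasurableSpace E] [OpensMeasurableSpace E]
    {μ : Measure E} [μ.IsOpenPosMeasure] {P : E → Prop} (hP : ∀ᵐ z ∂μ, P z) (x v : E) :
    ∃ y : ℕ → E, (∀ n, P (y n)) ∧ Tendsto (fun n : ℕ => ((n : ℝ) + 1) • (y n - x)) atTop (𝓝 v) := by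
  have hball (n : ℕ) : ∃ z ∈ Metric.ball (x + ((n : ℝ) + 1)⁻¹ • v) (((n : ℝ) + 1)⁻¹ ^ 2), P z :=
    Measure.exists_mem_of_measure_ne_zero_of_ae
      (Metric.measure_ball_pos μ _ (by positivity)).ne' (ae_restrict_of_ae hP)
  choose y hy hPy using hball
  refine ⟨y, hPy, tendsto_iff_norm_sub_tendsto_zero.2 <|
    squeeze_zero (fun _ => norm_nonneg _) (fun n => ?_) tendsto_one_div_add_atTop_nhds_zero_nat⟩
  have hn : (0 : ℝ) < (n : ℝ) + 1 := by positivity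
  have hdist := Metric.mem_ball.1 (hy n)
  rw [dist_eq_norm] at hdist
  have hrescale :
      ((n : ℝ) + 1) • (y n - (x + ((n : ℝ) + 1)⁻¹ • v)) = ((n : ℝ) + 1) • (y n - x) - v := by
    rw [smul_sub, smul_add, smul_inv_smul₀ hn.ne', smul_sub, sub_sub]
  calc ‖((n : ℝ) + 1) • (y n - x) - v‖
      = ((n : ℝ) + 1) * ‖y n - (x + ((n : ℝ) + 1)⁻¹ • v)‖ := by
        rw [← hrescale, norm_smul, Real.norm_of_nonneg hn.le]
    _ ≤ ((n : ℝ) + 1) * ((n : ℝ) + 1)⁻¹ ^ 2 := by gcongr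
    _ = 1 / ((n : ℝ) + 1) := by field_simp

end RescaledLimits

theorem ContinuousLinearMap.apply_prod_eq (L : ℝ × ℝ →L[ℝ] ℝ) (w : ℝ × ℝ) :
    L w = w.1 * L (1, 0) + w.2 * L (0, 1) := by
  conv_lhs => rw [show w = w.1 • ((1 : ℝ), (0 : ℝ)) + w.2 • ((0 : ℝ), (1 : ℝ)) by ext <;> simp]
  rw [map_add, map_smul, map_smul, smul_eq_mul, smul_eq_mul]

theorem sqrt_sq_sub_sq_le_mul_add_mul {N₁ N₂ w₁ w₂ : ℝ} (hN : N₁ ^ 2 - N₂ ^ 2 = 1) (hN₁ : 0 < N₁)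
    (hw : |w₂| ≤ w₁) : √(w₁ ^ 2 - w₂ ^ 2) ≤ N₁ * w₁ + N₂ * w₂ := by
  have hN₂ : |N₂| ≤ N₁ := abs_le_of_sq_le_sq (by linarith) hN₁.le
  have hpos : 0 ≤ N₁ * w₁ + N₂ * w₂ := by
    have := mul_le_mul hN₂ hw (abs_nonneg _) hN₁.le
    nlinarith [neg_abs_le (N₂ * w₂), abs_mul N₂ w₂]
  refine Real.sqrt_le_iff.2 ⟨hpos, ?_⟩
  nlinarith [sq_nonneg (N₁ * w₂ + N₂ * w₁)]

theorem one_le_sq_sub_sq_of_forall_sqrt_le {a b : ℝ}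
    (h : ∀ v₁ v₂ : ℝ, |v₂| < v₁ → √(v₁ ^ 2 - v₂ ^ 2) ≤ a * v₁ + b * v₂) : 1 ≤ a ^ 2 - b ^ 2 := by
  set s := √(1 + b ^ 2)
  have hs : s ^ 2 = 1 + b ^ 2 := Real.sq_sqrt (by positivity)
  have hbs : |b| < s := (Real.lt_sqrt (abs_nonneg b)).2 (by rw [sq_abs]; linarith)
  have hsb := h s (-b) (by rwa [abs_neg])
  rw [neg_sq, hs, add_sub_cancel_right, Real.sqrt_one] at hsb
  nlinarith [abs_nonneg b]

def SemiconcaveOn (u : ℝ × ℝ → ℝ) (O : Set (ℝ × ℝ)) (C : ℝ) : Prop :=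
  ∀ x ∈ O, ∀ y ∈ O, ∀ t ∈ Set.Icc (0 : ℝ) 1,
    (1 - t) * u x + t * u y - C / 2 * t * (1 - t) * ((x.1 - y.1) ^ 2 + (x.2 - y.2) ^ 2) ≤
      u ((1 - t) • x + t • y)

def SolvesEikonalAt (u : ℝ × ℝ → ℝ) (q : ℝ × ℝ) : Prop :=
  DifferentiableAt ℝ u q ∧ 0 < fderiv ℝ u q (1, 0) ∧
    (fderiv ℝ u q (1, 0)) ^ 2 - (fderiv ℝ u q (0, 1)) ^ 2 = 1

theorem tendsto_natCast_add_one_atTop : Tendsto (fun n : ℕ => (n : ℝ) + 1) atTop atTop :=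
  tendsto_atTop_add_const_right _ 1 tendsto_natCast_atTop_atTop

theorem tendsto_mul_sq_add_sq {α : Type*} {l : Filter α} {c : α → ℝ} {y : α → ℝ × ℝ}
    {x v : ℝ × ℝ} (hc : Tendsto c l atTop) (hy : Tendsto (fun n => c n • (y n - x)) l (𝓝 v)) :
    Tendsto (fun n => c n * (((y n).1 - x.1) ^ 2 + ((y n).2 - x.2) ^ 2)) l (𝓝 0) := by
  have hyx : Tendsto (fun n => y n - x) l (𝓝 0) := by
    simpa using (tendsto_of_tendsto_smul_sub hc hy).sub_const x
  have h := ((continuous_fst.tendsto v).comp hy).mul ((continuous_fst.tendsto 0).comp hyx) |>.add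
    (((continuous_snd.tendsto v).comp hy).mul ((continuous_snd.tendsto 0).comp hyx))
  simp only [Function.comp_def, Prod.fst_zero, Prod.snd_zero, mul_zero, add_zero] at h
  refine h.congr fun n => ?_
  simp only [Prod.smul_fst, Prod.smul_snd, Prod.fst_sub, Prod.snd_sub, smul_eq_mul]
  ring

theorem isLittleO_sq_add_sq : (fun h : ℝ × ℝ => h.1 ^ 2 + h.2 ^ 2) =o[𝓝 0] fun h => h := by
  refine (Asymptotics.IsBigO.of_bound 2 (.of_forall fun h => ?_)).trans_isLittleO
    (Asymptotics.isLittleO_norm_pow_id one_lt_two)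
  have h₁ : h.1 ^ 2 ≤ ‖h‖ ^ 2 := by simpa using pow_le_pow_left₀ (norm_nonneg _) (norm_fst_le h) 2
  have h₂ : h.2 ^ 2 ≤ ‖h‖ ^ 2 := by simpa using pow_le_pow_left₀ (norm_nonneg _) (norm_snd_le h) 2
  rw [Real.norm_of_nonneg (by positivity), Real.norm_of_nonneg (by positivity)]
  linarith

namespace SemiconcaveOn

variable {u : ℝ × ℝ → ℝ} {O : Set (ℝ × ℝ)} {C : ℝ} {p : ℝ × ℝ}

theorem le_add_fderiv (hu : SemiconcaveOn u O C) {q x : ℝ × ℝ} (hq : q ∈ O) (hx : x ∈ O)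
    (hd : DifferentiableAt ℝ u q) :
    u x ≤ u q + fderiv ℝ u q (x - q) + C / 2 * ((x.1 - q.1) ^ 2 + (x.2 - q.2) ^ 2) := by
  set E := (x.1 - q.1) ^ 2 + (x.2 - q.2) ^ 2
  set c : ℕ → ℝ := fun n => (n : ℝ) + 1
  have hslope := hd.hasFDerivAt.lim (x - q) (c := c)
    (tendsto_natCast_add_one_atTop.congr fun n => (Real.norm_of_nonneg (by positivity)).symm)
  have hchord : Tendsto (fun n => u x - u q - C / 2 * (1 - (c n)⁻¹) * E) atTop
      (𝓝 (u x - u q - C / 2 * (1 - 0) * E)) :=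
    (((tendsto_inv_atTop_zero.comp tendsto_natCast_add_one_atTop).const_sub 1).const_mul _
      |>.mul_const E).const_sub _
  suffices u x - u q - C / 2 * E ≤ fderiv ℝ u q (x - q) by linarith
  refine le_of_tendsto_of_tendsto' (by simpa using hchord) hslope fun n => ?_
  have hc : 0 < c n := by positivity
  have h := hu x hx q hq (1 - (c n)⁻¹)
    ⟨sub_nonneg.2 (inv_le_one_of_one_le₀ (by simp [c])), by simp; positivity⟩
  rw [show (1 - (1 - (c n)⁻¹)) • x + (1 - (c n)⁻¹) • q = q + (c n)⁻¹ • (x - q) by module] at h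
  have hchord_le : (c n)⁻¹ * (u x - u q - C / 2 * (1 - (c n)⁻¹) * E)
      ≤ u (q + (c n)⁻¹ • (x - q)) - u q := by linarith
  calc u x - u q - C / 2 * (1 - (c n)⁻¹) * E
      = c n * ((c n)⁻¹ * (u x - u q - C / 2 * (1 - (c n)⁻¹) * E)) := by field_simp
    _ ≤ c n • (u (q + (c n)⁻¹ • (x - q)) - u q) := by rw [smul_eq_mul]; gcongr

theorem second_difference_le (hu : SemiconcaveOn u O C) {h : ℝ × ℝ} (hadd : p + h ∈ O)
    (hsub : p - h ∈ O) : u (p + h) + u (p - h) - 2 * u p ≤ C * (h.1 ^ 2 + h.2 ^ 2) := by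
  have := hu _ hadd _ hsub (1 / 2) ⟨by norm_num, by norm_num⟩
  rw [show (1 - 1 / 2 : ℝ) • (p + h) + (1 / 2 : ℝ) • (p - h) = p by module] at this
  simp only [Prod.fst_add, Prod.snd_add, Prod.fst_sub, Prod.snd_sub] at this
  linarith

theorem hasFDerivAt_of_le {φ : ℝ × ℝ → ℝ} {L : ℝ × ℝ →L[ℝ] ℝ} (hu : SemiconcaveOn u O C)
    (hO : O ∈ 𝓝 p) (hφ : HasFDerivAt φ L p) (hφp : φ p = u p) (hle : ∀ᶠ x in 𝓝 p, φ x ≤ u x) :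
    HasFDerivAt u L p := by
  rw [hasFDerivAt_iff_isLittleO_nhds_zero] at hφ ⊢
  have hψneg : (fun h => φ (p + -h) - φ p - L (-h)) =o[𝓝 0] fun h => h :=
    (hφ.comp_tendsto (by simpa using (continuous_neg.tendsto (0 : ℝ × ℝ)))).trans_isBigO
      (Asymptotics.isBigO_refl _ _).neg_left
  have hadd : Tendsto (p + ·) (𝓝 0) (𝓝 p) := by
    simpa using (continuous_const_add p).tendsto (0 : ℝ × ℝ)
  have hsub : Tendsto (p - ·) (𝓝 0) (𝓝 p) := by
    simpa using (continuous_sub_left p).tendsto (0 : ℝ × ℝ)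
  refine Asymptotics.IsBigO.trans_isLittleO (Asymptotics.IsBigO.of_norm_eventuallyLE ?_)
    ((hφ.norm_left.add hψneg.norm_left).add (isLittleO_sq_add_sq.const_mul_left |C|))
  filter_upwards [hadd.eventually (inter_mem hO hle), hsub.eventually (inter_mem hO hle)]
    with h ⟨haddO, (haddφ : φ (p + h) ≤ u (p + h))⟩ ⟨hsubO, (hsubφ : φ (p - h) ≤ u (p - h))⟩
  have hmid := hu.second_difference_le haddO hsubO
  have hCE : C * (h.1 ^ 2 + h.2 ^ 2) ≤ |C| * (h.1 ^ 2 + h.2 ^ 2) :=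
    mul_le_mul_of_nonneg_right (le_abs_self C) (by positivity)
  rw [← sub_eq_add_neg, map_neg]
  set ψadd := φ (p + h) - φ p - L h
  set ψsub := φ (p - h) - φ p - -L h
  simp only [Real.norm_eq_abs]
  rw [abs_le]
  have hE : 0 ≤ |C| * (h.1 ^ 2 + h.2 ^ 2) := by positivity
  constructor <;> linarith [abs_nonneg ψsub, neg_abs_le ψadd, le_abs_self ψadd, neg_abs_le ψsub,
    le_abs_self ψsub]

theorem sqrt_sq_sub_sq_le_apply_of_le {φ : ℝ × ℝ → ℝ} {L : ℝ × ℝ →L[ℝ] ℝ} (hu : SemiconcaveOn u O C)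
    (hO : O ∈ 𝓝 p) (hae : ∀ᵐ q, SolvesEikonalAt u q) (hφ : HasFDerivAt φ L p)
    (hφp : φ p = u p) (hle : ∀ᶠ x in 𝓝 p, u x ≤ φ x) {v : ℝ × ℝ} (hv : |v.2| < v.1) :
    √(v.1 ^ 2 - v.2 ^ 2) ≤ L v := by
  obtain ⟨q, hq, hqv⟩ := exists_seq_forall_tendsto_smul_sub_of_ae hae p v
  have hc := tendsto_natCast_add_one_atTop
  have hqp := tendsto_of_tendsto_smul_sub hc hqv
  have hlhs : Tendsto (fun n : ℕ => √((((n : ℝ) + 1) • (q n - p)).1 ^ 2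
      - (((n : ℝ) + 1) • (q n - p)).2 ^ 2)) atTop (𝓝 √(v.1 ^ 2 - v.2 ^ 2)) :=
    (((continuous_fst.pow 2).sub (continuous_snd.pow 2)).sqrt.tendsto v).comp hqv
  have hrhs := (hφ.tendsto_smul_sub hc hqv).add
    ((tendsto_mul_sq_add_sq hc hqv).const_mul (C / 2))
  rw [mul_zero, add_zero] at hrhs
  have hcone : ∀ᶠ w in 𝓝 v, |w.2| < w.1 :=
    (isOpen_lt (continuous_abs.comp continuous_snd) continuous_fst).mem_nhds hv
  refine le_of_tendsto_of_tendsto hlhs hrhs ?_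
  filter_upwards [hqp.eventually hO, hqp.eventually hle, hqv.eventually hcone] with n hqO hφq hqcone
  obtain ⟨hd, hpos, heik⟩ := hq n
  have hsg := hu.le_add_fderiv hqO (mem_of_mem_nhds hO) hd
  set N := fderiv ℝ u (q n)
  calc √((((n : ℝ) + 1) • (q n - p)).1 ^ 2 - (((n : ℝ) + 1) • (q n - p)).2 ^ 2)
      ≤ N (1, 0) * (((n : ℝ) + 1) • (q n - p)).1 + N (0, 1) * (((n : ℝ) + 1) • (q n - p)).2 :=
        sqrt_sq_sub_sq_le_mul_add_mul heik hpos hqcone.le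
    _ = ((n : ℝ) + 1) * -N (p - q n) := by
        rw [N.apply_prod_eq (p - q n)]; simp only [Prod.smul_fst, Prod.smul_snd, Prod.fst_sub,
          Prod.snd_sub, smul_eq_mul]; ring
    _ ≤ ((n : ℝ) + 1) * (φ (q n) - φ p + C / 2 * (((q n).1 - p.1) ^ 2 + ((q n).2 - p.2) ^ 2)) := by
        gcongr; nlinarith
    _ = _ := by rw [smul_eq_mul]; ring

theorem one_le_sq_sub_sq_of_le {φ : ℝ × ℝ → ℝ} {L : ℝ × ℝ →L[ℝ] ℝ} (hu : SemiconcaveOn u O C)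
    (hO : O ∈ 𝓝 p) (hae : ∀ᵐ q, SolvesEikonalAt u q) (hφ : HasFDerivAt φ L p)
    (hφp : φ p = u p) (hle : ∀ᶠ x in 𝓝 p, u x ≤ φ x) : 1 ≤ L (1, 0) ^ 2 - L (0, 1) ^ 2 :=
  one_le_sq_sub_sq_of_forall_sqrt_le fun v₁ v₂ hv => by
    simpa [L.apply_prod_eq (v₁, v₂), mul_comm] using
      hu.sqrt_sq_sub_sq_le_apply_of_le hO hae hφ hφp hle (v := (v₁, v₂)) hv

theorem tendsto_fderiv_apply {α : Type*} {l : Filter α} {c : α → ℝ} {q : α → ℝ × ℝ}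
    {L : ℝ × ℝ →L[ℝ] ℝ} (hu : SemiconcaveOn u O C) (hO : O ∈ 𝓝 p) (hup : HasFDerivAt u L p)
    (hc : Tendsto c l atTop) (hq : ∀ᶠ n in l, DifferentiableAt ℝ u (q n))
    (hqp : Tendsto (fun n => c n • (q n - p)) l (𝓝 0)) (d : ℝ × ℝ) :
    Tendsto (fun n => fderiv ℝ u (q n) d) l (𝓝 (L d)) := by
  -- the supergradient inequality at `q n`, evaluated at `q n + (c n)⁻¹ • d`
  have hlower (d : ℝ × ℝ) :
      ∃ f : α → ℝ, Tendsto f l (𝓝 (L d)) ∧ ∀ᶠ n in l, f n ≤ fderiv ℝ u (q n) d := by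
    set x := fun n => q n + (c n)⁻¹ • d
    have hxq (n : α) : x n - q n = (c n)⁻¹ • d := add_sub_cancel_left _ _
    have hxp : Tendsto (fun n => c n • (x n - p)) l (𝓝 d) := by
      have hshift : Tendsto (fun n => c n • (q n - p) + d) l (𝓝 d) := by
        simpa using hqp.add_const d
      refine hshift.congr' ?_
      filter_upwards [hc.eventually_ne_atTop 0] with n hn
      rw [show x n - p = (q n - p) + (c n)⁻¹ • d by simp only [x]; abel, smul_add,
        smul_inv_smul₀ hn]
    refine ⟨fun n => c n • (u (x n) - u p) - c n • (u (q n) - u p)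
      - C / 2 * (c n)⁻¹ * (d.1 ^ 2 + d.2 ^ 2), ?_, ?_⟩
    · simpa using ((hup.tendsto_smul_sub hc hxp).sub (hup.tendsto_smul_sub hc hqp)).sub
        (((tendsto_inv_atTop_zero.comp hc).const_mul (C / 2)).mul_const (d.1 ^ 2 + d.2 ^ 2))
    filter_upwards [hq, (tendsto_of_tendsto_smul_sub hc hxp).eventually hO,
      (tendsto_of_tendsto_smul_sub hc hqp).eventually hO, hc.eventually_gt_atTop 0]
      with n hd hxO hqO hcn
    have hsg := hu.le_add_fderiv hqO hxO hd
    rw [← Prod.fst_sub, ← Prod.snd_sub, hxq, map_smul] at hsg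
    simp only [Prod.smul_fst, Prod.smul_snd, smul_eq_mul] at hsg ⊢
    have hscale : c n * ((c n)⁻¹ * fderiv ℝ u (q n) d
        + C / 2 * (((c n)⁻¹ * d.1) ^ 2 + ((c n)⁻¹ * d.2) ^ 2))
        = fderiv ℝ u (q n) d + C / 2 * (c n)⁻¹ * (d.1 ^ 2 + d.2 ^ 2) := by
      field_simp
    nlinarith [mul_le_mul_of_nonneg_left (sub_le_iff_le_add'.2 hsg) hcn.le]
  obtain ⟨f, hf, hfle⟩ := hlower d
  obtain ⟨g, hg, hgle⟩ := hlower (-d)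
  refine tendsto_of_tendsto_of_tendsto_of_le_of_le' hf (by simpa using hg.neg) hfle ?_
  filter_upwards [hgle] with n hn
  rw [map_neg] at hn
  linarith

theorem sq_sub_sq_eq_one {L : ℝ × ℝ →L[ℝ] ℝ} (hu : SemiconcaveOn u O C) (hO : O ∈ 𝓝 p)
    (hae : ∀ᵐ q, SolvesEikonalAt u q) (hup : HasFDerivAt u L p) :
    L (1, 0) ^ 2 - L (0, 1) ^ 2 = 1 := by
  obtain ⟨q, hq, hqp⟩ := exists_seq_forall_tendsto_smul_sub_of_ae hae p 0
  have hgrad (d : ℝ × ℝ) := hu.tendsto_fderiv_apply hO hup tendsto_natCast_add_one_atTop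
    (.of_forall fun n => (hq n).1) hqp d
  refine tendsto_nhds_unique (((hgrad (1, 0)).pow 2).sub ((hgrad (0, 1)).pow 2)) ?_
  simpa only [(hq _).2.2] using tendsto_const_nhds

end SemiconcaveOn

/-- If `u : ℝ² → ℝ` is locally semiconcave and, for Lebesgue-almost every `p`, `u` is
differentiable at `p` with `∂u/∂x(p) > 0` and `(∂u/∂x(p))² - (∂u/∂y(p))² = 1`, then
`u` is a viscosity solution of the Lorentzian eikonal equation `g(∇u,∇u) = -1` on the
2-dimensional Minkowski space-time. -/
theorem viscositySolution_of_locallySemiconcave_ae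
    (u : ℝ × ℝ → ℝ) (hsc : LocallySemiconcave u)
    (hae : ∀ᵐ p ∂(MeasureTheory.volume : MeasureTheory.Measure (ℝ × ℝ)),
      DifferentiableAt ℝ u p ∧ 0 < fderiv ℝ u p (1, 0) ∧
        (fderiv ℝ u p (1, 0)) ^ 2 - (fderiv ℝ u p (0, 1)) ^ 2 = 1) :
    IsViscositySolution u Set.univ := by
  have hderiv {p : ℝ × ℝ} {φ : ℝ × ℝ → ℝ} {U : Set (ℝ × ℝ)} (hU : U ∈ 𝓝 p)
      (hφ : ContDiffOn ℝ 1 φ U) : HasFDerivAt φ (fderiv ℝ φ p) p :=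
    ((hφ.contDiffAt hU).differentiableAt one_ne_zero).hasFDerivAt
  refine ⟨fun p _ φ U hU hpU _ hφ hφp hle => ?_, fun p _ φ U hU hpU _ hφ hφp hle => ?_⟩
  · obtain ⟨O, hO, -, hpO, C, -, hu⟩ := hsc p
    exact SemiconcaveOn.one_le_sq_sub_sq_of_le (u := u) hu (hO.mem_nhds hpO) hae
      (hderiv (hU.mem_nhds hpU) hφ) hφp (eventually_of_mem (hU.mem_nhds hpU) hle)
  · obtain ⟨O, hO, -, hpO, C, -, hu⟩ := hsc p
    have hup := SemiconcaveOn.hasFDerivAt_of_le (u := u) hu (hO.mem_nhds hpO)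
      (hderiv (hU.mem_nhds hpU) hφ) hφp (eventually_of_mem (hU.mem_nhds hpU) hle)
    exact (SemiconcaveOn.sq_sub_sq_eq_one (u := u) hu (hO.mem_nhds hpO) hae hup).le
end

section
/- Let u : ℝ² → ℝ be a locally Lipschitz viscosity solution of the Lorentzian eikonal equation g(∇u,∇u) = −1 on the 2-dimensional Minkowski space-time. Then u has past-directed time orientation (∂u/∂x(p) > 0 at every point p where u is differentiable) if and only if u is strictly increasing along every nonconstant future-directed causal curve: for every C¹ curve γ : [a, b] → ℝ² with a < b, γ₁′(t) > 0 and |γ₂′(t)| ≤ γ₁′(t) for all t ∈ [a,b], one has u(γ(b)) > u(γ(a)). -/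
/-!
At a point where `u` is differentiable the viscosity inequality holds classically,
`(∂ₓu)² - (∂ᵧu)² ≥ 1`: maximising `u - Du(p) - n |· - p|²` near `p` yields `C¹` functions
touching `u` from above at points `X → p` whose gradients tend to `Du(p)`.

If `∂ₓu > 0` wherever `u` is differentiable, then on a ball where `u` is `K`-Lipschitz this gives
`∂ₓu - |∂ᵧu| ≥ 1 / (2K)`, so the derivative of `u` in a future causal direction `v` is at least
`v₁ / (2K)` almost everywhere. By Rademacher's theorem and Fubini the same holds at almost every
point of almost every line parallel to `v`; integrating along such lines and letting them tend to a
given line shows that `u` increases strictly along every causal segment, hence along every causal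
curve, whose chord is causal. Conversely, increase along the null directions `(1, ±1)` gives
`∂ₓu ≥ |∂ᵧu|`, which together with `(∂ₓu)² - (∂ᵧu)² ≥ 1` forces `∂ₓu > 0`.
-/

open Set Filter Topology MeasureTheory Metric

open scoped NNReal

theorem strictMono_of_forall_eventually_lt {α β : Type*} [ConditionallyCompleteLinearOrder α]
    [TopologicalSpace α] [OrderTopology α] [DenselyOrdered α] [LinearOrder β] [TopologicalSpace β]
    [OrderClosedTopology β] {f : α → β} (hf : Continuous f)
    (h : ∀ x, ∀ᶠ y in 𝓝[>] x, f x < f y) : StrictMono f := by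
  have hmono : Monotone f := fun a b hab =>
    (isClosed_le continuous_const hf).inter isClosed_Icc |>.Icc_subset_of_forall_mem_nhdsWithin
      (le_refl (f a)) (fun y hy => (h y).mono fun z hz => hy.1.trans hz.le) ⟨hab, le_rfl⟩
  intro a b hab
  have := nhdsGT_neBot_of_exists_gt ⟨b, hab⟩
  obtain ⟨c, hac, hcb⟩ := ((h a).and (Ioc_mem_nhdsGT hab)).exists
  exact hac.trans_le (hmono hcb.2)

theorem LipschitzOnWith.mul_sub_le_sub_of_le_deriv {g : ℝ → ℝ} {K : ℝ≥0} {a b c : ℝ}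
    (hab : a ≤ b) (hg : LipschitzOnWith K g (Icc a b))
    (hc : ∀ᵐ t, t ∈ Ioo a b → c ≤ deriv g t) : c * (b - a) ≤ g b - g a := by
  have hac := (uIcc_of_le hab ▸ hg).absolutelyContinuousOnInterval
  have hc' : ∀ᵐ t ∂volume.restrict (Icc a b), c ≤ deriv g t := by
    rwa [← Measure.restrict_congr_set Ioo_ae_eq_Icc, ae_restrict_iff' measurableSet_Ioo]
  calc c * (b - a) = ∫ _ in a..b, c := by simp [mul_comm]
    _ ≤ ∫ t in a..b, deriv g t :=
      intervalIntegral.integral_mono_ae_restrict hab intervalIntegrable_const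
        hac.intervalIntegrable_deriv hc'
    _ = g b - g a := hac.integral_deriv_eq_sub

section LinesInVectorSpace

variable {E : Type*} [NormedAddCommGroup E] [NormedSpace ℝ E]

theorem hasDerivAt_add_smul (x v : E) (t : ℝ) : HasDerivAt (fun t : ℝ => x + t • v) v t := by
  simpa using ((hasDerivAt_id t).smul_const v).const_add x

theorem lipschitzWith_add_smul (x v : E) : LipschitzWith ‖v‖₊ fun t : ℝ => x + t • v :=
  LipschitzWith.of_dist_le_mul fun s t => by
    simp [dist_eq_norm, ← sub_smul, norm_smul, mul_comm]

theorem HasFDerivAt.nonneg_of_monotone_add_smul {u : E → ℝ} {L : E →L[ℝ] ℝ} {p w : E}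
    (hd : HasFDerivAt u L p) (hmono : Monotone fun t : ℝ => u (p + t • w)) : 0 ≤ L w := by
  rw [← (hd.comp_hasDerivAt_of_eq 0 (hasDerivAt_add_smul p w 0) (by simp)).deriv]
  exact hmono.deriv_nonneg

theorem ae_ae_add_smul [MeasurableSpace E] [BorelSpace E] [SecondCountableTopology E]
    {μ : Measure E} [μ.IsAddRightInvariant] [SFinite μ] {P : E → Prop}
    (h : ∀ᵐ y ∂μ, P y) (v : E) : ∀ᵐ w ∂μ, ∀ᵐ t : ℝ, P (w + t • v) := by
  obtain ⟨N, hPN, hNm, hN0⟩ := exists_measurable_superset_of_null (ae_iff.1 h)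
  have hS : MeasurableSet {z : E × ℝ | z.1 + z.2 • v ∈ N} := hNm.preimage (by fun_prop)
  have hS0 : (μ.prod volume) {z : E × ℝ | z.1 + z.2 • v ∈ N} = 0 := by
    rw [Measure.prod_apply_symm hS]
    have hslice (t : ℝ) : (fun w => (w, t)) ⁻¹' {z : E × ℝ | z.1 + z.2 • v ∈ N} =
        (fun w => w + t • v) ⁻¹' N := rfl
    simp_rw [hslice, measure_preimage_add_right, hN0, lintegral_zero]
  filter_upwards [Measure.measure_ae_null_of_prod_null hS0] with w hw
  exact ae_iff.2 (measure_mono_null (fun t ht => hPN ht) hw)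

theorem LipschitzOnWith.mul_le_sub_of_le_fderiv [FiniteDimensional ℝ E] {u : E → ℝ} {U : Set E}
    {K : ℝ≥0} (hU : IsOpen U) (hu : LipschitzOnWith K u U) {v : E} {c : ℝ}
    (hc : ∀ y ∈ U, DifferentiableAt ℝ u y → c ≤ fderiv ℝ u y v) {x : E} {T : ℝ} (hT : 0 ≤ T)
    (hseg : ∀ t ∈ Icc 0 T, x + t • v ∈ U) : c * T ≤ u (x + T • v) - u x := by
  borelize E
  let μ : Measure E := Measure.addHaar
  have hdiff : ∀ᵐ y ∂μ, y ∈ U → DifferentiableAt ℝ u y := by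
    filter_upwards [hu.ae_differentiableWithinAt_of_mem] with y hy hyU
    exact (hy hyU).differentiableAt (hU.mem_nhds hyU)
  obtain ⟨δ, hδ, hδU⟩ : ∃ δ > 0, ∀ w ∈ ball x δ, ∀ t ∈ Icc 0 T, w + t • v ∈ U := by
    obtain ⟨δ, hδ, hsub⟩ := (isCompact_Icc.image (by fun_prop : Continuous fun t : ℝ => x + t • v)
      |>.exists_thickening_subset_open hU (image_subset_iff.2 hseg))
    refine ⟨δ, hδ, fun w hw t ht => hsub (mem_thickening_iff.2 ⟨x + t • v, ⟨t, ht, rfl⟩, ?_⟩)⟩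
    simpa using hw
  have hgood : ∀ᵐ w ∂μ, w ∈ ball x δ → c * T ≤ u (w + T • v) - u w := by
    filter_upwards [ae_ae_add_smul hdiff v] with w hw hwx
    have hline : LipschitzOnWith (K * ‖v‖₊) (fun t : ℝ => u (w + t • v)) (Icc 0 T) :=
      hu.comp (lipschitzWith_add_smul w v).lipschitzOnWith (hδU w hwx)
    simpa using hline.mul_sub_le_sub_of_le_deriv hT <| by
      filter_upwards [hw] with t ht htT
      have hmem := hδU w hwx t (Ioo_subset_Icc_self htT)
      have hderiv : HasDerivAt (fun t : ℝ => u (w + t • v)) (fderiv ℝ u (w + t • v) v) t :=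
        (ht hmem).hasFDerivAt.comp_hasDerivAt t (hasDerivAt_add_smul w v t)
      rw [hderiv.deriv]
      exact hc _ hmem (ht hmem)
  have hfreq : ∃ᶠ w in 𝓝 x, c * T ≤ u (w + T • v) - u w := by
    have hx : x ∈ closure {w | w ∈ ball x δ → c * T ≤ u (w + T • v) - u w} := by
      rw [(Measure.dense_of_ae hgood).closure_eq]; exact mem_univ x
    exact ((mem_closure_iff_frequently.1 hx).and_eventually (ball_mem_nhds x hδ)).mono
      fun w hw => hw.1 hw.2
  have hcont : ContinuousAt (fun w => u (w + T • v) - u w) x := by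
    have hxU : x ∈ U := by simpa using hseg 0 ⟨le_rfl, hT⟩
    refine ContinuousAt.sub ?_ (hu.continuousOn.continuousAt (hU.mem_nhds hxU))
    exact (hu.continuousOn.continuousAt (hU.mem_nhds (hseg T ⟨hT, le_rfl⟩))).comp
      (f := fun w => w + T • v) (by fun_prop)
  exact isClosed_Ici.mem_of_frequently_of_tendsto hfreq hcont

end LinesInVectorSpace

theorem ContinuousLinearMap.apply_eq_fst_mul_add_snd_mul (L : ℝ × ℝ →L[ℝ] ℝ) (v : ℝ × ℝ) :
    L v = v.1 * L (1, 0) + v.2 * L (0, 1) := by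
  conv_lhs => rw [show v = v.1 • ((1 : ℝ), (0 : ℝ)) + v.2 • ((0 : ℝ), (1 : ℝ)) by ext <;> simp]
  rw [map_add, map_smul, map_smul, smul_eq_mul, smul_eq_mul]

/-- The norm of `ℝ × ℝ` is the sup norm, which is not smooth; penalisations use this instead. -/
def sqEuclidDist (p y : ℝ × ℝ) : ℝ := (y.1 - p.1) ^ 2 + (y.2 - p.2) ^ 2

theorem sq_norm_sub_le_sqEuclidDist (p y : ℝ × ℝ) : ‖y - p‖ ^ 2 ≤ sqEuclidDist p y := by
  rw [sqEuclidDist, Prod.norm_def, Real.norm_eq_abs, Real.norm_eq_abs]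
  rcases max_cases |y.1 - p.1| |y.2 - p.2| with ⟨h, -⟩ | ⟨h, -⟩ <;> rw [Prod.fst_sub,
    Prod.snd_sub, h, sq_abs] <;> nlinarith [sq_nonneg (y.1 - p.1), sq_nonneg (y.2 - p.2)]

theorem contDiff_sqEuclidDist (p : ℝ × ℝ) : ContDiff ℝ 1 (sqEuclidDist p) := by
  unfold sqEuclidDist; fun_prop

theorem norm_fderiv_sqEuclidDist_le (p X : ℝ × ℝ) :
    ‖fderiv ℝ (sqEuclidDist p) X‖ ≤ 4 * ‖X - p‖ := by
  let fst := ContinuousLinearMap.fst ℝ ℝ ℝ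
  let snd := ContinuousLinearMap.snd ℝ ℝ ℝ
  have hq : HasFDerivAt (sqEuclidDist p) ((2 : ℝ) • ((X.1 - p.1) • fst + (X.2 - p.2) • snd)) X := by
    have h : HasFDerivAt (sqEuclidDist p) _ X :=
      (((hasFDerivAt_fst (𝕜 := ℝ) (p := X)).sub_const p.1).pow 2).add
        (((hasFDerivAt_snd (𝕜 := ℝ) (p := X)).sub_const p.2).pow 2)
    refine h.congr_fderiv ?_
    ext <;> simp [fst, snd]
  have hX₁ : ‖X.1 - p.1‖ ≤ ‖X - p‖ := norm_fst_le (X - p)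
  have hX₂ : ‖X.2 - p.2‖ ≤ ‖X - p‖ := norm_snd_le (X - p)
  rw [hq.fderiv, norm_smul, Real.norm_two]
  calc 2 * ‖(X.1 - p.1) • fst + (X.2 - p.2) • snd‖
      ≤ 2 * (‖X.1 - p.1‖ * ‖fst‖ + ‖X.2 - p.2‖ * ‖snd‖) := by
        gcongr
        exact (norm_add_le _ _).trans_eq (by rw [norm_smul, norm_smul])
    _ ≤ 2 * (‖X - p‖ * 1 + ‖X - p‖ * 1) := by
        gcongr
        exacts [ContinuousLinearMap.norm_fst_le ℝ ℝ ℝ, ContinuousLinearMap.norm_snd_le ℝ ℝ ℝ]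
    _ = 4 * ‖X - p‖ := by ring

/-- Maximising `u - Du(p) - n |· - p|²` over a small ball around `p` gives a point `X` with
`n |X - p|² ≤ u(X) - u(p) - Du(p)(X - p) = o(|X - p|)`. -/
theorem exists_isMaxOn_penalized {u : ℝ × ℝ → ℝ} {O : Set (ℝ × ℝ)} (hO : IsOpen O)
    (hu : ContinuousOn u O) {p : ℝ × ℝ} (hp : p ∈ O) (hd : DifferentiableAt ℝ u p) {ε : ℝ}
    (hε : 0 < ε) :
    ∃ r > 0, ∃ n > 0, ∃ X ∈ ball p r, closedBall p r ⊆ O ∧ n * ‖X - p‖ ≤ ε ∧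
      IsMaxOn (fun y => u y - fderiv ℝ u p y - n * sqEuclidDist p y) (closedBall p r) X := by
  set D := fderiv ℝ u p
  obtain ⟨r, hr, hr'⟩ := nhds_basis_closedBall.eventually_iff.1
    ((hd.hasFDerivAt.isLittleO.def hε).and (hO.mem_nhds hp))
  have hrO : closedBall p r ⊆ O := fun y hy => (hr' hy).2
  set n := 2 * ε / r
  have hn : 0 < n := by positivity
  obtain ⟨X, hXr, hXmax⟩ := (isCompact_closedBall p r).exists_isMaxOn
    ⟨p, mem_closedBall_self hr.le⟩ (((hu.mono hrO).sub D.continuous.continuousOn).sub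
      ((contDiff_sqEuclidDist p).continuous.continuousOn.const_smul n))
  have hnX : n * ‖X - p‖ ≤ ε := by
    have hpen : n * sqEuclidDist p X ≤ ε * ‖X - p‖ := by
      have h₁ : u p - D p - n * sqEuclidDist p p ≤ u X - D X - n * sqEuclidDist p X :=
        hXmax (mem_closedBall_self hr.le)
      have h₂ := (le_abs_self _).trans ((hr' hXr).1)
      simp only [sqEuclidDist, sub_self, map_sub] at h₁ h₂ ⊢
      nlinarith
    have hq := sq_norm_sub_le_sqEuclidDist p X
    rcases (norm_nonneg (X - p)).eq_or_lt with h | h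
    · rw [← h, mul_zero]; exact hε.le
    · nlinarith
  have hXball : X ∈ ball p r := by
    rw [mem_ball, dist_eq_norm]
    refine lt_of_mul_lt_mul_left (hnX.trans_lt ?_) hn.le
    simp only [n]; field_simp; linarith
  exact ⟨r, hr, n, hn, X, hXball, hrO, hnX, hXmax⟩

/-- The test functions are `u(X) + Du(p)(y - X) + n (|y - p|² - |X - p|²)`, for the penalised
maximisers `X` above. -/
theorem exists_upper_test_function_fderiv_near {u : ℝ × ℝ → ℝ} {O : Set (ℝ × ℝ)} (hO : IsOpen O)
    (hu : ContinuousOn u O) {p : ℝ × ℝ} (hp : p ∈ O) (hd : DifferentiableAt ℝ u p) {ε : ℝ}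
    (hε : 0 < ε) :
    ∃ X φ U, IsOpen U ∧ X ∈ U ∧ U ⊆ O ∧ ContDiffOn ℝ 1 φ U ∧ φ X = u X ∧
      (∀ y ∈ U, u y ≤ φ y) ∧ dist (fderiv ℝ φ X) (fderiv ℝ u p) < ε := by
  set D := fderiv ℝ u p
  obtain ⟨r, -, n, hn, X, hXr, hrO, hnX, hXmax⟩ :=
    exists_isMaxOn_penalized hO hu hp hd (by positivity : 0 < ε / 8)
  set c := u X - D X - n * sqEuclidDist p X
  let φ : ℝ × ℝ → ℝ := fun y => c + D y + n * sqEuclidDist p y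
  have hq := contDiff_sqEuclidDist p
  have hφ : HasFDerivAt φ (D + n • fderiv ℝ (sqEuclidDist p) X) X :=
    (D.hasFDerivAt.const_add c).add
      ((hq.differentiable one_ne_zero X).hasFDerivAt.const_mul n)
  refine ⟨X, φ, ball p r, isOpen_ball, hXr, ball_subset_closedBall.trans hrO,
    ((contDiff_const.add D.contDiff).add (contDiff_const.mul hq)).contDiffOn,
    by simp only [φ, c]; ring, fun y hy => ?_, ?_⟩
  · have : u y - D y - n * sqEuclidDist p y ≤ c := hXmax (ball_subset_closedBall hy)
    simp only [φ]
    linarith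
  · rw [hφ.fderiv, dist_eq_norm, add_sub_cancel_left, norm_smul, Real.norm_of_nonneg hn.le]
    calc n * ‖fderiv ℝ (sqEuclidDist p) X‖ ≤ n * (4 * ‖X - p‖) :=
          mul_le_mul_of_nonneg_left (norm_fderiv_sqEuclidDist_le p X) hn.le
      _ < ε := by linarith

theorem IsViscositySolution.one_le_fderiv_sq_sub_sq {u : ℝ × ℝ → ℝ} {O : Set (ℝ × ℝ)}
    (hvisc : IsViscositySolution u O) (hO : IsOpen O) (hu : ContinuousOn u O) {p : ℝ × ℝ}
    (hp : p ∈ O) (hd : DifferentiableAt ℝ u p) :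
    1 ≤ fderiv ℝ u p (1, 0) ^ 2 - fderiv ℝ u p (0, 1) ^ 2 := by
  have hS : IsClosed {L : ℝ × ℝ →L[ℝ] ℝ | 1 ≤ L (1, 0) ^ 2 - L (0, 1) ^ 2} :=
    isClosed_le continuous_const (by fun_prop)
  refine hS.closure_subset (Metric.mem_closure_iff.2 fun ε hε => ?_)
  obtain ⟨X, φ, U, hU, hXU, hUO, hφ, hφX, hle, hdist⟩ :=
    exists_upper_test_function_fderiv_near hO hu hp hd hε
  exact ⟨fderiv ℝ φ X, hvisc.1 X (hUO hXU) φ U hU hXU hUO hφ hφX hle, by rwa [dist_comm]⟩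

def IsFutureCausal (v : ℝ × ℝ) : Prop := 0 < v.1 ∧ |v.2| ≤ v.1

theorem IsFutureCausal.smul {v : ℝ × ℝ} (hv : IsFutureCausal v) {c : ℝ} (hc : 0 < c) :
    IsFutureCausal (c • v) := by
  refine ⟨mul_pos hc hv.1, ?_⟩
  simpa [abs_mul, abs_of_pos hc] using mul_le_mul_of_nonneg_left hv.2 hc.le

theorem IsFutureCausal.sub_of_hasDerivWithinAt {γ γ' : ℝ → ℝ × ℝ} {a b : ℝ} (hab : a < b)
    (hγ : ∀ t ∈ Icc a b, HasDerivWithinAt γ (γ' t) (Icc a b) t)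
    (hγ' : ∀ t ∈ Icc a b, IsFutureCausal (γ' t)) : IsFutureCausal (γ b - γ a) := by
  have hcont (ℓ : ℝ × ℝ →L[ℝ] ℝ) : ContinuousOn (ℓ ∘ γ) (Icc a b) :=
    ℓ.continuous.comp_continuousOn fun t ht => (hγ t ht).continuousWithinAt
  have hderiv (ℓ : ℝ × ℝ →L[ℝ] ℝ) : ∀ t ∈ interior (Icc a b),
      HasDerivWithinAt (ℓ ∘ γ) (ℓ (γ' t)) (interior (Icc a b)) t := fun t ht =>
    ℓ.hasFDerivAt.comp_hasDerivWithinAt t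
      ((hγ t (interior_subset ht)).mono interior_subset)
  have hmem : a ∈ Icc a b ∧ b ∈ Icc a b := ⟨left_mem_Icc.2 hab.le, right_mem_Icc.2 hab.le⟩
  let fst := ContinuousLinearMap.fst ℝ ℝ ℝ
  let snd := ContinuousLinearMap.snd ℝ ℝ ℝ
  have h₁ := strictMonoOn_of_hasDerivWithinAt_pos (convex_Icc a b) (hcont fst) (hderiv fst)
    (fun t ht => (hγ' t (interior_subset ht)).1) hmem.1 hmem.2 hab
  have hcone : ∀ t ∈ interior (Icc a b), 0 ≤ (γ' t).1 - (γ' t).2 ∧ 0 ≤ (γ' t).1 + (γ' t).2 :=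
    fun t ht => by have := abs_le.1 (hγ' t (interior_subset ht)).2; constructor <;> linarith
  have h₂ := monotoneOn_of_hasDerivWithinAt_nonneg (convex_Icc a b) (hcont (fst - snd))
    (hderiv (fst - snd)) (fun t ht => by simpa [fst, snd] using (hcone t ht).1) hmem.1 hmem.2 hab.le
  have h₃ := monotoneOn_of_hasDerivWithinAt_nonneg (convex_Icc a b) (hcont (fst + snd))
    (hderiv (fst + snd)) (fun t ht => by simpa [fst, snd] using (hcone t ht).2) hmem.1 hmem.2 hab.le
  simp only [Function.comp_apply, sub_apply, add_apply,
    fst, snd, ContinuousLinearMap.coe_fst', ContinuousLinearMap.coe_snd'] at h₁ h₂ h₃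
  exact ⟨by simpa using h₁, by rw [abs_le]; constructor <;> simp <;> linarith⟩

theorem IsFutureCausal.div_le_apply {L : ℝ × ℝ →L[ℝ] ℝ} {v : ℝ × ℝ} {K : ℝ}
    (hv : IsFutureCausal v) (hL : 1 ≤ L (1, 0) ^ 2 - L (0, 1) ^ 2) (hpos : 0 < L (1, 0))
    (hK : ‖L‖ ≤ K) : v.1 / (2 * K) ≤ L v := by
  set a := L (1, 0)
  set b := L (0, 1)
  have ha : |a| ≤ K := by simpa [a] using L.le_of_opNorm_le hK (1, 0)
  have hb : |b| ≤ K := by simpa [b] using L.le_of_opNorm_le hK (0, 1)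
  -- `a - |b| = (a² - b²) / (a + |b|) ≥ 1 / (2K)`
  have hgap : 1 / (2 * K) ≤ a - |b| := by
    have hK0 : 0 < K := hpos.trans_le ((le_abs_self a).trans ha)
    rw [div_le_iff₀ (by positivity)]
    nlinarith [sq_abs b, abs_nonneg b, le_abs_self a]
  have hsb : -(v.1 * |b|) ≤ v.2 * b := by
    have := abs_mul v.2 b ▸ neg_abs_le (v.2 * b)
    nlinarith [abs_nonneg b, hv.2]
  rw [L.apply_eq_fst_mul_add_snd_mul]
  calc v.1 / (2 * K) = v.1 * (1 / (2 * K)) := by ring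
    _ ≤ v.1 * (a - |b|) := mul_le_mul_of_nonneg_left hgap hv.1.le
    _ ≤ v.1 * a + v.2 * b := by linarith

section Eikonal

variable {u : ℝ × ℝ → ℝ}

theorem IsViscositySolution.eventually_lt_add_smul (hvisc : IsViscositySolution u univ)
    (hLip : LocallyLipschitz u)
    (hpos : ∀ p, DifferentiableAt ℝ u p → 0 < fderiv ℝ u p (1, 0)) {v : ℝ × ℝ}
    (hv : IsFutureCausal v) (x : ℝ × ℝ) : ∀ᶠ t : ℝ in 𝓝[>] 0, u x < u (x + t • v) := by
  obtain ⟨K, s, hs, hK⟩ := hLip x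
  obtain ⟨r, hr, hrs⟩ := Metric.mem_nhds_iff.1 hs
  have hKr : LipschitzOnWith (K + 1) u (ball x r) :=
    (hK.mono hrs).weaken (le_add_of_nonneg_right zero_le_one)
  have hc : ∀ y ∈ ball x r, DifferentiableAt ℝ u y →
      v.1 / (2 * (K + 1 : ℝ≥0)) ≤ fderiv ℝ u y v := fun y hy hdy =>
    hv.div_le_apply (hvisc.one_le_fderiv_sq_sub_sq isOpen_univ hLip.continuous.continuousOn
      (mem_univ y) hdy) (hpos y hdy) (norm_fderiv_le_of_lipschitzOn ℝ (isOpen_ball.mem_nhds hy) hKr)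
  have hball : ∀ᶠ s : ℝ in 𝓝 0, x + s • v ∈ ball x r :=
    (by fun_prop : Continuous fun s : ℝ => x + s • v).continuousAt.eventually_mem
      (by simpa using ball_mem_nhds x hr)
  obtain ⟨δ, hδ, hδr⟩ := Metric.eventually_nhds_iff.1 hball
  filter_upwards [Ioo_mem_nhdsGT hδ] with t ht
  have hseg : ∀ s ∈ Icc 0 t, x + s • v ∈ ball x r := fun s hs =>
    hδr (by rw [Real.dist_eq, sub_zero, abs_of_nonneg hs.1]; exact hs.2.trans_lt ht.2)
  have hrise := hKr.mul_le_sub_of_le_fderiv isOpen_ball hc ht.1.le hseg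
  have hc₀ : 0 < v.1 / (2 * (K + 1 : ℝ≥0)) * t := mul_pos (div_pos hv.1 (by positivity)) ht.1
  linarith

theorem IsViscositySolution.lt_add_of_isFutureCausal (hvisc : IsViscositySolution u univ)
    (hLip : LocallyLipschitz u)
    (hpos : ∀ p, DifferentiableAt ℝ u p → 0 < fderiv ℝ u p (1, 0)) {v : ℝ × ℝ}
    (hv : IsFutureCausal v) (x : ℝ × ℝ) : u x < u (x + v) := by
  have hmono : StrictMono fun t : ℝ => u (x + t • v) := by
    refine strictMono_of_forall_eventually_lt (hLip.continuous.comp (by fun_prop)) fun t₀ => ?_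
    rw [← add_zero t₀, ← map_add_left_nhdsGT, eventually_map]
    filter_upwards [hvisc.eventually_lt_add_smul hLip hpos hv (x + t₀ • v)] with t ht
    simpa [add_smul, add_assoc] using ht
  simpa using hmono zero_lt_one

theorem fderiv_fst_pos_of_lt_add (hinc : ∀ x v, IsFutureCausal v → u x < u (x + v)) {p : ℝ × ℝ}
    (hd : DifferentiableAt ℝ u p) (h1 : 1 ≤ fderiv ℝ u p (1, 0) ^ 2 - fderiv ℝ u p (0, 1) ^ 2) :
    0 < fderiv ℝ u p (1, 0) := by
  have hnonneg : ∀ v, IsFutureCausal v → 0 ≤ fderiv ℝ u p v := fun v hv =>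
    hd.hasFDerivAt.nonneg_of_monotone_add_smul <| StrictMono.monotone fun s t hst => by
      simpa [add_assoc, ← add_smul] using hinc (p + s • v) ((t - s) • v) (hv.smul (sub_pos.2 hst))
  have hnull₁ := hnonneg (1, 1) ⟨one_pos, by simp⟩
  have hnull₂ := hnonneg (1, -1) ⟨one_pos, by simp⟩
  rw [ContinuousLinearMap.apply_eq_fst_mul_add_snd_mul] at hnull₁ hnull₂
  nlinarith

end Eikonal

/-- A locally Lipschitz viscosity solution `u` of the Lorentzian eikonal equation on
2-dimensional Minkowski space-time has past-directed time orientation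
(`∂u/∂x(p) > 0` at every differentiability point `p`) if and only if `u` is strictly
increasing along every nonconstant future-directed causal C¹ curve: for every C¹
curve `γ : [a, b] → ℝ²` with `a < b`, `γ₁' > 0` and `|γ₂'| ≤ γ₁'` on `[a,b]`,
one has `u(γ(b)) > u(γ(a))`. -/
theorem past_directed_iff_increasing_along_causal
    (u : ℝ × ℝ → ℝ) (hLip : LocallyLipschitz u)
    (hvisc : IsViscositySolution u Set.univ) :
    (∀ p : ℝ × ℝ, DifferentiableAt ℝ u p → 0 < fderiv ℝ u p (1, 0)) ↔
    (∀ (a b : ℝ), a < b → ∀ γ γ' : ℝ → ℝ × ℝ,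
      ContinuousOn γ' (Set.Icc a b) →
      (∀ t ∈ Set.Icc a b, HasDerivWithinAt γ (γ' t) (Set.Icc a b) t) →
      (∀ t ∈ Set.Icc a b, 0 < (γ' t).1 ∧ |(γ' t).2| ≤ (γ' t).1) →
      u (γ a) < u (γ b)) := by
  constructor
  · intro hpos a b hab γ γ' _ hγ hγ'
    simpa using hvisc.lt_add_of_isFutureCausal hLip hpos
      (IsFutureCausal.sub_of_hasDerivWithinAt hab hγ hγ') (γ a)
  · intro hcurve p hd
    refine fderiv_fst_pos_of_lt_add (fun x v hv => ?_) hd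
      (hvisc.one_le_fderiv_sq_sub_sq isOpen_univ hLip.continuous.continuousOn (mem_univ p) hd)
    simpa using hcurve 0 1 one_pos (fun t => x + t • v) (fun _ => v) continuousOn_const
      (fun t _ => (hasDerivAt_add_smul x v t).hasDerivWithinAt) fun _ _ => hv
end
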